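/- arXiv:1307.3192 — 9 statements merged into one kernel-verified Lean document; each statement's English description precedes it below -/
import Mathlib

section
/- Let X_1,...,X_n be independent Bernoulli random variables with E[X_i] ≤ r for all i, where 0 < r < 1. For each i let w_i : {0,1}^{i-1} → [0,1] be a function such that for every (x_1,...,x_n) ∈ {0,1}^n we have ∑_{i=1}^n w_i(x_1,...,x_{i-1}) = μ/r. Then for every δ > 0, P(∑_{i=1}^n w_i(X_1,...,X_{i-1}) X_i ≥ (1+δ)μ) ≤ (e^δ / (1+δ)^{1+δ})^μ. -/
open MeasureTheory ProbabilityTheory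

/-!
Put `t = log (1 + δ)` and let `Sₖ`, `Mₖ` be the weighted sum and the total weight of the first `k`
trials. Then `Zₖ = exp (t Sₖ - (eᵗ - 1) r Mₖ)` is a supermartingale: the `k`-th weight is a
function of the earlier trials, hence independent of `Xₖ`, and by convexity of `exp`,
`1 + p (e^{t w} - 1) ≤ exp ((eᵗ - 1) r w)` for `0 ≤ p ≤ r` and `w ∈ [0, 1]`. As `r Mₙ = μ`
identically, `E[exp (t Sₙ)] ≤ exp ((eᵗ - 1) μ)`, and Markov's inequality gives the bound.
-/

theorem DependsOn.apply_updateFinset_restrict {ι β : Type*} {α : ι → Type*} [DecidableEq ι]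
    {f : (∀ i, α i) → β} {S : Finset ι} (hf : DependsOn f S) (x₀ x : ∀ i, α i) :
    f (Function.updateFinset x₀ S (S.restrict x)) = f x :=
  hf fun i hi => by simp [Function.updateFinset, Finset.mem_coe.mp hi]

theorem ProbabilityTheory.iIndepFun.integral_mul_of_dependsOn {Ω ι : Type*} {β : ι → Type*}
    [MeasurableSpace Ω] [∀ i, MeasurableSpace (β i)] [∀ i, Nonempty (β i)] {μ : Measure Ω}
    {V : ∀ i, Ω → β i} (hind : iIndepFun V μ) (hV : ∀ i, Measurable (V i))
    {S T : Finset ι} (hST : Disjoint S T) {f g : (∀ i, β i) → ℝ}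
    (hfm : Measurable f) (hgm : Measurable g) (hf : DependsOn f S) (hg : DependsOn g T) :
    ∫ ω, f (fun i => V i ω) * g (fun i => V i ω) ∂μ =
      (∫ ω, f (fun i => V i ω) ∂μ) * ∫ ω, g (fun i => V i ω) ∂μ := by
  classical
  let x₀ : ∀ i, β i := fun _ => Classical.arbitrary _
  have hfg : IndepFun (fun ω => f fun i => V i ω) (fun ω => g fun i => V i ω) μ := by
    convert (hind.indepFun_finset S T hST hV).comp (hfm.comp (measurable_updateFinset (x := x₀)))
      (hgm.comp (measurable_updateFinset (x := x₀))) using 1 <;> funext ω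
    exacts [(hf.apply_updateFinset_restrict x₀ _).symm, (hg.apply_updateFinset_restrict x₀ _).symm]
  have hV' : Measurable fun ω i => V i ω := measurable_pi_lambda _ hV
  exact hfg.integral_mul_eq_mul_integral (hfm.comp hV').aestronglyMeasurable
    (hgm.comp hV').aestronglyMeasurable

theorem Real.exp_mul_sub_one_le_mul_exp_sub_one {t w : ℝ} (hw : w ∈ Set.Icc (0 : ℝ) 1) :
    Real.exp (t * w) - 1 ≤ w * (Real.exp t - 1) := by
  have h := convexOn_exp.2 (Set.mem_univ t) (Set.mem_univ 0) hw.1 (sub_nonneg.2 hw.2)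
    (add_sub_cancel w 1)
  simp only [smul_eq_mul, mul_zero, add_zero, Real.exp_zero, mul_one, mul_comm w t] at h
  linarith

theorem Real.one_add_mul_exp_mul_sub_one_le {p r t w : ℝ} (hp : 0 ≤ p) (hpr : p ≤ r) (ht : 0 ≤ t)
    (hw : w ∈ Set.Icc (0 : ℝ) 1) :
    1 + p * (Real.exp (t * w) - 1) ≤ Real.exp ((Real.exp t - 1) * r * w) := by
  have hexp : 0 ≤ Real.exp (t * w) - 1 := sub_nonneg.2 (Real.one_le_exp (mul_nonneg ht hw.1))
  calc 1 + p * (Real.exp (t * w) - 1) ≤ 1 + r * (w * (Real.exp t - 1)) := by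
        gcongr
        · exact hp.trans hpr
        · exact Real.exp_mul_sub_one_le_mul_exp_sub_one hw
    _ ≤ Real.exp ((Real.exp t - 1) * r * w) := by
        linarith [Real.add_one_le_exp ((Real.exp t - 1) * r * w)]

section AdaptiveBernoulliSum

variable {Ω : Type*} [MeasurableSpace Ω] {μ : Measure Ω} {n : ℕ} {V : Fin n → Ω → Bool}

theorem integral_mul_toNat_of_dependsOn_Iio (hind : iIndepFun V μ) (hV : ∀ i, Measurable (V i))
    {k : Fin n} {F : (Fin n → Bool) → ℝ} (hF : DependsOn F (Set.Iio k)) :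
    ∫ ω, F (fun i => V i ω) * ((V k ω).toNat : ℝ) ∂μ =
      (∫ ω, F (fun i => V i ω) ∂μ) * ∫ ω, ((V k ω).toNat : ℝ) ∂μ :=
  hind.integral_mul_of_dependsOn hV (S := Finset.Iio k) (T := {k})
    (g := fun v => ((v k).toNat : ℝ)) (by simp) .of_discrete .of_discrete (by rwa [Finset.coe_Iio])
    (fun x y h => congrArg (fun b : Bool => (b.toNat : ℝ)) (h k (by simp)))

variable (W : Fin n → (Fin n → Bool) → ℝ) (r t : ℝ)

noncomputable def chernoffSupermartingale (k : ℕ) (v : Fin n → Bool) : ℝ :=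
  Real.exp (∑ i : Fin n with i.val < k, (t * (v i).toNat - (Real.exp t - 1) * r) * W i v)

theorem chernoffSupermartingale_zero (v : Fin n → Bool) :
    chernoffSupermartingale W r t 0 v = 1 := by
  simp [chernoffSupermartingale]

theorem chernoffSupermartingale_succ (k : Fin n) (v : Fin n → Bool) :
    chernoffSupermartingale W r t (k + 1) v = chernoffSupermartingale W r t k v *
      Real.exp ((t * (v k).toNat - (Real.exp t - 1) * r) * W k v) := by
  have hfilter : Finset.univ.filter (fun i : Fin n => i.val < k + 1) =
      insert k (Finset.univ.filter fun i : Fin n => i.val < k) := by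
    ext i
    simp only [Finset.mem_filter, Finset.mem_insert, Finset.mem_univ, true_and, Fin.ext_iff]
    omega
  rw [chernoffSupermartingale, chernoffSupermartingale, hfilter, Finset.sum_insert (by simp),
    add_comm, Real.exp_add]

theorem chernoffSupermartingale_last (v : Fin n → Bool) :
    chernoffSupermartingale W r t n v =
      Real.exp (t * ∑ i, W i v * (v i).toNat - (Real.exp t - 1) * (r * ∑ i, W i v)) := by
  rw [chernoffSupermartingale, Finset.filter_true_of_mem fun i _ => i.is_lt, Finset.mul_sum,
    Finset.mul_sum, Finset.mul_sum, ← Finset.sum_sub_distrib]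
  exact congrArg Real.exp (Finset.sum_congr rfl fun i _ => by ring)

variable {W} in
theorem dependsOn_chernoffSupermartingale (hW : ∀ i, DependsOn (W i) (Set.Iio i)) (k : ℕ) :
    DependsOn (chernoffSupermartingale W r t k) {i | i.val < k} := by
  intro x y hxy
  refine congrArg Real.exp (Finset.sum_congr rfl fun i hi => ?_)
  have hik : (i : ℕ) < k := by simpa using hi
  rw [hxy i hik, hW i fun j hj => hxy j (lt_trans hj hik)]

variable {W r t}

theorem integral_chernoffSupermartingale_succ_le [IsFiniteMeasure μ] (hind : iIndepFun V μ)
    (hV : ∀ i, Measurable (V i)) (hp : ∀ i, ∫ ω, ((V i ω).toNat : ℝ) ∂μ ≤ r)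
    (hW01 : ∀ i v, W i v ∈ Set.Icc (0 : ℝ) 1) (hWdep : ∀ i, DependsOn (W i) (Set.Iio i))
    (ht : 0 ≤ t) (k : Fin n) :
    ∫ ω, chernoffSupermartingale W r t (k + 1) (fun i => V i ω) ∂μ ≤
      ∫ ω, chernoffSupermartingale W r t k (fun i => V i ω) ∂μ := by
  obtain ⟨p, hp_def⟩ : ∃ p, ∫ ω, ((V k ω).toNat : ℝ) ∂μ = p := ⟨_, rfl⟩
  have hint (F : (Fin n → Bool) → ℝ) : Integrable (fun ω => F fun i => V i ω) μ :=
    Integrable.of_finite.comp_measurable (measurable_pi_lambda _ hV)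
  let A v := chernoffSupermartingale W r t k v * Real.exp (-((Real.exp t - 1) * r * W k v))
  let B v := A v * (Real.exp (t * W k v) - 1)
  have hsplit (v : Fin n → Bool) :
      chernoffSupermartingale W r t (k + 1) v = A v + B v * (v k).toNat := by
    rw [chernoffSupermartingale_succ]
    cases v k
    · simp [A, B, neg_mul]
    · rw [Bool.toNat_true, Nat.cast_one, mul_one, mul_one, sub_mul, sub_eq_neg_add,
        Real.exp_add]
      ring
  have hB : DependsOn B (Set.Iio k) := fun x y h => by
    simp only [B, A, hWdep k h]
    rw [dependsOn_chernoffSupermartingale r t hWdep k h]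
  have hbound (v : Fin n → Bool) : A v + B v * p ≤ chernoffSupermartingale W r t k v := by
    have hA : 0 ≤ A v := mul_nonneg (Real.exp_pos _).le (Real.exp_pos _).le
    have hp0 : 0 ≤ p := hp_def ▸ integral_nonneg fun ω => by positivity
    have hexp := Real.one_add_mul_exp_mul_sub_one_le hp0 (hp_def ▸ hp k) ht (hW01 k v)
    calc A v + B v * p = A v * (1 + p * (Real.exp (t * W k v) - 1)) := by ring
      _ ≤ A v * Real.exp ((Real.exp t - 1) * r * W k v) := by gcongr
      _ = chernoffSupermartingale W r t k v := by
        rw [mul_assoc, ← Real.exp_add, neg_add_cancel, Real.exp_zero, mul_one]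
  calc ∫ ω, chernoffSupermartingale W r t (k + 1) (fun i => V i ω) ∂μ
      = ∫ ω, A (fun i => V i ω) + B (fun i => V i ω) * (V k ω).toNat ∂μ := by simp_rw [hsplit]
    _ = ∫ ω, A (fun i => V i ω) + B (fun i => V i ω) * p ∂μ := by
      rw [integral_add (hint A) (hint fun v => B v * (v k).toNat),
        integral_mul_toNat_of_dependsOn_Iio hind hV hB, hp_def,
        integral_add (hint A) ((hint B).mul_const p), integral_mul_const]
    _ ≤ ∫ ω, chernoffSupermartingale W r t k (fun i => V i ω) ∂μ :=
      integral_mono (hint fun v => A v + B v * p) (hint _) fun ω => hbound _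

theorem integral_chernoffSupermartingale_le_one [IsProbabilityMeasure μ] (hind : iIndepFun V μ)
    (hV : ∀ i, Measurable (V i)) (hp : ∀ i, ∫ ω, ((V i ω).toNat : ℝ) ∂μ ≤ r)
    (hW01 : ∀ i v, W i v ∈ Set.Icc (0 : ℝ) 1) (hWdep : ∀ i, DependsOn (W i) (Set.Iio i))
    (ht : 0 ≤ t) {k : ℕ} (hk : k ≤ n) :
    ∫ ω, chernoffSupermartingale W r t k (fun i => V i ω) ∂μ ≤ 1 := by
  induction k with
  | zero => simp [chernoffSupermartingale_zero]
  | succ k ih =>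
    exact (integral_chernoffSupermartingale_succ_le hind hV hp hW01 hWdep ht ⟨k, hk⟩).trans
      (ih (Nat.le_of_succ_le hk))

theorem integral_exp_mul_weightedSum_le [IsProbabilityMeasure μ] (hind : iIndepFun V μ)
    (hV : ∀ i, Measurable (V i)) (hp : ∀ i, ∫ ω, ((V i ω).toNat : ℝ) ∂μ ≤ r)
    (hW01 : ∀ i v, W i v ∈ Set.Icc (0 : ℝ) 1) (hWdep : ∀ i, DependsOn (W i) (Set.Iio i))
    {m : ℝ} (hsum : ∀ v, r * ∑ i, W i v = m) (ht : 0 ≤ t) :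
    ∫ ω, Real.exp (t * ∑ i, W i (fun j => V j ω) * (V i ω).toNat) ∂μ ≤
      Real.exp ((Real.exp t - 1) * m) := by
  calc ∫ ω, Real.exp (t * ∑ i, W i (fun j => V j ω) * (V i ω).toNat) ∂μ
      = ∫ ω, Real.exp ((Real.exp t - 1) * m) *
          chernoffSupermartingale W r t n (fun i => V i ω) ∂μ := by
        refine integral_congr_ae (ae_of_all _ fun ω => ?_)
        simp only [chernoffSupermartingale_last, hsum, ← Real.exp_add]
        ring_nf
    _ ≤ Real.exp ((Real.exp t - 1) * m) * 1 := by
        rw [integral_const_mul]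
        gcongr
        exact integral_chernoffSupermartingale_le_one hind hV hp hW01 hWdep ht le_rfl
    _ = Real.exp ((Real.exp t - 1) * m) := mul_one _

theorem measure_weightedSum_ge_le [IsProbabilityMeasure μ] (hind : iIndepFun V μ)
    (hV : ∀ i, Measurable (V i)) (hp : ∀ i, ∫ ω, ((V i ω).toNat : ℝ) ∂μ ≤ r)
    (hW01 : ∀ i v, W i v ∈ Set.Icc (0 : ℝ) 1) (hWdep : ∀ i, DependsOn (W i) (Set.Iio i))
    {m : ℝ} (hsum : ∀ v, r * ∑ i, W i v = m) {δ : ℝ} (hδ : 0 ≤ δ) :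
    μ {ω | (1 + δ) * m ≤ ∑ i, W i (fun j => V j ω) * (V i ω).toNat} ≤
      ENNReal.ofReal ((Real.exp δ / (1 + δ) ^ (1 + δ)) ^ m) := by
  have hδ' : 0 < 1 + δ := by linarith
  set t := Real.log (1 + δ) with ht_def
  have ht : 0 ≤ t := Real.log_nonneg (by linarith)
  have hint : Integrable (fun ω => Real.exp (t * ∑ i, W i (fun j => V j ω) * (V i ω).toNat)) μ :=
    (Integrable.of_finite (f := fun v : Fin n → Bool =>
      Real.exp (t * ∑ i, W i v * (v i).toNat))).comp_measurable (measurable_pi_lambda _ hV)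
  rw [← ofReal_measureReal]
  refine ENNReal.ofReal_le_ofReal ?_
  calc μ.real {ω | (1 + δ) * m ≤ ∑ i, W i (fun j => V j ω) * (V i ω).toNat}
      ≤ Real.exp (-t * ((1 + δ) * m)) * Real.exp ((Real.exp t - 1) * m) :=
        (measure_ge_le_exp_mul_mgf _ ht hint).trans <| by
          gcongr
          exact integral_exp_mul_weightedSum_le hind hV hp hW01 hWdep hsum ht
    _ = (Real.exp δ / (1 + δ) ^ (1 + δ)) ^ m := by
        rw [Real.rpow_def_of_pos (by positivity), Real.log_div (by positivity) (by positivity),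
          Real.log_exp, Real.log_rpow hδ', Real.exp_log hδ', ← Real.exp_add, ← ht_def]
        ring_nf

end AdaptiveBernoulliSum

theorem stmt1_general {Ω : Type*} [MeasurableSpace Ω] (μ : Measure Ω) [IsProbabilityMeasure μ]
    (n : ℕ) (X : Fin n → Ω → ℝ) (r : ℝ) (hr0 : 0 < r)
    (h01 : ∀ i ω, X i ω = 0 ∨ X i ω = 1)
    (hmeas : ∀ i, Measurable (X i))
    (hind : iIndepFun X μ)
    (hE : ∀ i, ∫ ω, X i ω ∂μ ≤ r)
    (w : Fin n → (Fin n → ℝ) → ℝ)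
    (hw01 : ∀ i x, w i x ∈ Set.Icc (0 : ℝ) 1)
    (hprefix : ∀ i : Fin n, ∀ x y : Fin n → ℝ,
      (∀ j : Fin n, (j : ℕ) < (i : ℕ) → x j = y j) → w i x = w i y)
    (μ₀ : ℝ)
    (hsum : ∀ x : Fin n → ℝ, (∀ j, x j = 0 ∨ x j = 1) → ∑ i, w i x = μ₀ / r)
    (δ : ℝ) (hδ : 0 < δ) :
    μ {ω | (1 + δ) * μ₀ ≤ ∑ i, w i (fun j => X j ω) * X i ω} ≤
      ENNReal.ofReal ((Real.exp δ / (1 + δ) ^ (1 + δ)) ^ μ₀) := by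
  have hdec : Measurable fun x : ℝ => decide (x = 1) :=
    measurable_to_bool (by convert measurableSet_singleton (1 : ℝ); ext; simp)
  -- Bool-valued trials make every function of the trials measurable, which `w` need not be.
  let V i ω := decide (X i ω = 1)
  have hX (i ω) : X i ω = (V i ω).toNat := by rcases h01 i ω with h | h <;> simp [V, h]
  have hsumV (v : Fin n → Bool) : r * ∑ i, w i (fun j => ((v j).toNat : ℝ)) = μ₀ := by
    rw [hsum _ fun j => by cases v j <;> simp, mul_div_cancel₀ _ hr0.ne']
  have hbound := measure_weightedSum_ge_le (V := V) (hind.comp _ fun _ => hdec)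
    (fun i => hdec.comp (hmeas i))
    (fun i => (integral_congr_ae (ae_of_all _ fun ω => (hX i ω).symm)).trans_le (hE i))
    (fun i v => hw01 i _) (fun i x y h => hprefix i _ _ fun j hj => by rw [h j hj]) hsumV hδ.le
  convert hbound using 6 with ω i
  simp only [← hX]

theorem stmt1 {Ω : Type*} [MeasurableSpace Ω] (μ : Measure Ω) [IsProbabilityMeasure μ]
    (n : ℕ) (X : Fin n → Ω → ℝ) (r : ℝ) (hr0 : 0 < r) (hr1 : r < 1)
    (h01 : ∀ i ω, X i ω = 0 ∨ X i ω = 1)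
    (hmeas : ∀ i, Measurable (X i))
    (hind : iIndepFun X μ)
    (hE : ∀ i, ∫ ω, X i ω ∂μ ≤ r)
    (w : Fin n → (Fin n → ℝ) → ℝ)
    (hw01 : ∀ i x, w i x ∈ Set.Icc (0 : ℝ) 1)
    (hprefix : ∀ i : Fin n, ∀ x y : Fin n → ℝ,
      (∀ j : Fin n, (j : ℕ) < (i : ℕ) → x j = y j) → w i x = w i y)
    (μ₀ : ℝ) (hμ₀ : 0 < μ₀)
    (hsum : ∀ x : Fin n → ℝ, (∀ j, x j = 0 ∨ x j = 1) → ∑ i, w i x = μ₀ / r)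
    (δ : ℝ) (hδ : 0 < δ) :
    μ {ω | (1 + δ) * μ₀ ≤ ∑ i, w i (fun j => X j ω) * X i ω} ≤
      ENNReal.ofReal ((Real.exp δ / (1 + δ) ^ (1 + δ)) ^ μ₀) :=
  stmt1_general μ n X r hr0 h01 hmeas hind hE w hw01 hprefix μ₀ hsum δ hδ
end

section
/- Let X_1,...,X_n be independent Bernoulli random variables with E[X_i] ≤ r for all i, where 0 < r < 1, and let w_i : {0,1}^{i-1} → [0,1] be arbitrary functions. Then for every B ≥ 1: P(∑_i w_i(X_1,...,X_{i-1}) X_i ≥ (3/((1-r)² r)) B AND ∑_i w_i(X_1,...,X_{i-1})(1 - X_i) ≤ B) ≤ exp(−B). -/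
open MeasureTheory ProbabilityTheory Set Real

/-!
Put `l = (1 - r)² r / 2` and `M_k = ∏_{i<k} exp (l w_i X_i - w_i (1 - X_i) / 2)`. Given
`X_1, …, X_{k-1}`, the next factor is affine in `X_k`, which is independent of the past, so its
conditional mean is `(1 - p) e^{-w/2} + p e^{l w}` with `p = E X_k ≤ r`; by convexity in `w` this
is at most `1` as soon as it is at `w = 1`, an elementary inequality in `r`. Hence `E M_n ≤ 1`.
On the event, `log M_n ≥ 3B/2 - B/2 = B`, and Markov's inequality bounds its probability by
`e^{-B}`.
-/

theorem Set.Countable.measurable_indicator {α β : Type*} [MeasurableSpace α]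
    [MeasurableSingletonClass α] [MeasurableSpace β] [Zero β] {s : Set α} (hs : s.Countable)
    (g : α → β) : Measurable (s.indicator g) := by
  intro T hT
  rw [indicator_preimage, Set.ite]
  exact ((hs.mono inter_subset_right).measurableSet).union
    ((measurable_const hT).diff hs.measurableSet)

theorem comp_eq_indicator_range_comp {Ω α β : Type*} [Zero β] (g : α → β) (Y : Ω → α) :
    g ∘ Y = (range Y).indicator g ∘ Y := by
  funext ω; simp

section FiniteRange

variable {Ω α : Type*} [MeasurableSpace Ω] {μ : Measure Ω} [MeasurableSpace α]
  [MeasurableSingletonClass α] {Y : Ω → α}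

theorem Measurable.comp_of_countable_range (hY : Measurable Y) (hc : (range Y).Countable)
    {β : Type*} [MeasurableSpace β] [Zero β] (g : α → β) : Measurable (g ∘ Y) := by
  rw [comp_eq_indicator_range_comp g Y]
  exact (hc.measurable_indicator g).comp hY

theorem integrable_comp_of_finite_range [IsFiniteMeasure μ] (hY : Measurable Y)
    (hfin : (range Y).Finite) (g : α → ℝ) : Integrable (fun ω => g (Y ω)) μ := by
  obtain ⟨C, hC⟩ := (hfin.image fun a => ‖g a‖).bddAbove
  exact .of_bound (hY.comp_of_countable_range hfin.countable g).aestronglyMeasurable C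
    (.of_forall fun ω => hC ⟨Y ω, mem_range_self ω, rfl⟩)

namespace ProbabilityTheory

theorem IndepFun.comp_of_countable_range {Z : Ω → ℝ} (hYZ : IndepFun Y Z μ)
    (hc : (range Y).Countable) (g : α → ℝ) : IndepFun (g ∘ Y) Z μ := by
  rw [comp_eq_indicator_range_comp g Y]
  exact hYZ.comp (hc.measurable_indicator g) measurable_id

theorem IndepFun.integral_comp_mul_one_sub_add_comp_mul [IsProbabilityMeasure μ] {Z : Ω → ℝ}
    (hYZ : IndepFun Y Z μ) (hY : Measurable Y) (hfin : (range Y).Finite) (hZ : Integrable Z μ)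
    (g₀ g₁ : α → ℝ) :
    ∫ ω, g₀ (Y ω) * (1 - Z ω) + g₁ (Y ω) * Z ω ∂μ =
      ∫ ω, (1 - ∫ ω, Z ω ∂μ) * g₀ (Y ω) + (∫ ω, Z ω ∂μ) * g₁ (Y ω) ∂μ := by
  have hint := integrable_comp_of_finite_range (μ := μ) hY hfin
  have hindep := hYZ.comp_of_countable_range hfin.countable (g₁ - g₀)
  have hprod : Integrable (fun ω => (g₁ - g₀) (Y ω) * Z ω) μ :=
    hindep.integrable_mul (hint _) hZ
  calc ∫ ω, g₀ (Y ω) * (1 - Z ω) + g₁ (Y ω) * Z ω ∂μ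
      = ∫ ω, g₀ (Y ω) + (g₁ - g₀) (Y ω) * Z ω ∂μ := by
        congr 1; funext ω; simp only [Pi.sub_apply]; ring
    _ = ∫ ω, g₀ (Y ω) ∂μ + (∫ ω, (g₁ - g₀) (Y ω) ∂μ) * ∫ ω, Z ω ∂μ := by
        rw [integral_add (hint g₀) hprod]
        congr 1
        exact hindep.integral_mul_eq_mul_integral (hint _).aestronglyMeasurable
          hZ.aestronglyMeasurable
    _ = ∫ ω, g₀ (Y ω) + (∫ ω, Z ω ∂μ) * (g₁ - g₀) (Y ω) ∂μ := by
        rw [integral_add (hint g₀) ((hint _).const_mul _), integral_const_mul, mul_comm]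
    _ = _ := by congr 1; funext ω; simp only [Pi.sub_apply]; ring

end ProbabilityTheory

end FiniteRange

theorem finite_range_of_forall_apply_mem {Ω ι β : Type*} [Finite ι] {s : Set β} (hs : s.Finite)
    {Y : Ω → ι → β} (hY : ∀ ω j, Y ω j ∈ s) : (range Y).Finite :=
  (Set.Finite.pi' fun _ => hs).subset (range_subset_iff.2 hY)

section PastValues

variable {Ω : Type*} {n : ℕ} {X : Fin n → Ω → ℝ}

def pastValues (X : Fin n → Ω → ℝ) (a : Fin n) (ω : Ω) : Fin n → ℝ :=
  fun j => if j < a then X j ω else 0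

theorem finite_range_pastValues (h01 : ∀ i ω, X i ω = 0 ∨ X i ω = 1) (a : Fin n) :
    (range (pastValues X a)).Finite :=
  finite_range_of_forall_apply_mem (s := {0, 1}) (by simp) fun ω j => by
    by_cases h : j < a
    · simpa [pastValues, h] using h01 j ω
    · simp [pastValues, h]

variable [MeasurableSpace Ω] {μ : Measure Ω}

theorem measurable_pastValues (hmeas : ∀ i, Measurable (X i)) (a : Fin n) :
    Measurable (pastValues X a) :=
  measurable_pi_lambda _ fun j => by
    by_cases h : j < a
    · simpa only [pastValues, if_pos h] using hmeas j
    · simpa only [pastValues, if_neg h] using measurable_const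

theorem indepFun_pastValues (hmeas : ∀ i, Measurable (X i)) (hind : iIndepFun X μ) (a : Fin n) :
    IndepFun (pastValues X a) (X a) μ := by
  have hpad : Measurable fun (v : Finset.Iio a → ℝ) (j : Fin n) =>
      if h : j < a then v ⟨j, Finset.mem_Iio.2 h⟩ else 0 :=
    measurable_pi_lambda _ fun j => by
      by_cases h : j < a
      · simpa only [dif_pos h] using measurable_pi_apply _
      · simpa only [dif_neg h] using measurable_const
  exact (hind.indepFun_finset (Finset.Iio a) {a} (by simp) hmeas).comp hpad
    (measurable_pi_apply ⟨a, Finset.mem_singleton_self a⟩)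

end PastValues

section Supermartingale

variable {Ω : Type*} {n : ℕ} {X : Fin n → Ω → ℝ} {F : Fin n → (Fin n → ℝ) → ℝ}

theorem prod_eq_prod_pastValues (hFdep : ∀ i, DependsOn (F i) (Iic i)) {s : Finset (Fin n)}
    {a : Fin n} (has : ∀ i ∈ s, i < a) (ω : Ω) :
    ∏ i ∈ s, F i (fun j => X j ω) = ∏ i ∈ s, F i (pastValues X a ω) :=
  Finset.prod_congr rfl fun i hi => hFdep i fun j hj => by
    simp [pastValues, lt_of_le_of_lt hj (has i hi)]

theorem apply_eq_apply_update_pastValues {a : Fin n} (hFdep : DependsOn (F a) (Iic a)) (ω : Ω) :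
    F a (fun j => X j ω) = F a (Function.update (pastValues X a ω) a (X a ω)) :=
  hFdep fun j hj => by
    rcases (mem_Iic.1 hj).lt_or_eq with hj | rfl
    · simp [pastValues, hj, hj.ne]
    · simp

variable [MeasurableSpace Ω] {μ : Measure Ω} [IsProbabilityMeasure μ]

theorem integral_prod_insert_le (hmeas : ∀ i, Measurable (X i)) (hind : iIndepFun X μ)
    (h01 : ∀ i ω, X i ω = 0 ∨ X i ω = 1) (hF0 : ∀ i x, 0 ≤ F i x)
    (hFdep : ∀ i, DependsOn (F i) (Iic i))
    (hstep : ∀ i x, (1 - ∫ ω, X i ω ∂μ) * F i (Function.update x i 0) +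
      (∫ ω, X i ω ∂μ) * F i (Function.update x i 1) ≤ 1)
    {s : Finset (Fin n)} {a : Fin n} (has : ∀ i ∈ s, i < a) :
    ∫ ω, ∏ i ∈ insert a s, F i (fun j => X j ω) ∂μ ≤ ∫ ω, ∏ i ∈ s, F i (fun j => X j ω) ∂μ := by
  set Y := pastValues X a
  set p := ∫ ω, X a ω ∂μ
  let g : ℝ → (Fin n → ℝ) → ℝ := fun t y => (∏ i ∈ s, F i y) * F a (Function.update y a t)
  have hYfin := finite_range_pastValues h01 a
  have hint := integrable_comp_of_finite_range (μ := μ) (measurable_pastValues hmeas a) hYfin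
  have hsplit : ∀ ω, ∏ i ∈ insert a s, F i (fun j => X j ω) =
      g 0 (Y ω) * (1 - X a ω) + g 1 (Y ω) * X a ω := by
    intro ω
    rw [Finset.prod_insert fun ha => lt_irrefl a (has a ha), prod_eq_prod_pastValues hFdep has,
      apply_eq_apply_update_pastValues (hFdep a), mul_comm]
    rcases h01 a ω with h | h <;> simp [h, g, Y]
  have hXa : Integrable (X a) μ := by
    simpa using integrable_comp_of_finite_range (μ := μ) (hmeas a)
      (((finite_singleton 1).insert 0).subset (range_subset_iff.2 (h01 a))) id
  calc ∫ ω, ∏ i ∈ insert a s, F i (fun j => X j ω) ∂μ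
      = ∫ ω, (1 - p) * g 0 (Y ω) + p * g 1 (Y ω) ∂μ := by
        simp_rw [hsplit]
        exact (indepFun_pastValues hmeas hind a).integral_comp_mul_one_sub_add_comp_mul
          (measurable_pastValues hmeas a) hYfin hXa (g 0) (g 1)
    _ ≤ ∫ ω, ∏ i ∈ s, F i (Y ω) ∂μ := by
        refine integral_mono (hint fun y => (1 - p) * g 0 y + p * g 1 y)
          (hint fun y => ∏ i ∈ s, F i y) fun ω => ?_
        have := mul_le_mul_of_nonneg_left (hstep a (Y ω))
          (Finset.prod_nonneg (s := s) fun i _ => hF0 i (Y ω))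
        linear_combination this
    _ = ∫ ω, ∏ i ∈ s, F i (fun j => X j ω) ∂μ := by
        simp_rw [prod_eq_prod_pastValues hFdep has]; rfl

theorem integral_prod_le_one (hmeas : ∀ i, Measurable (X i)) (hind : iIndepFun X μ)
    (h01 : ∀ i ω, X i ω = 0 ∨ X i ω = 1) (hF0 : ∀ i x, 0 ≤ F i x)
    (hFdep : ∀ i, DependsOn (F i) (Iic i))
    (hstep : ∀ i x, (1 - ∫ ω, X i ω ∂μ) * F i (Function.update x i 0) +
      (∫ ω, X i ω ∂μ) * F i (Function.update x i 1) ≤ 1) :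
    ∫ ω, ∏ i, F i (fun j => X j ω) ∂μ ≤ 1 := by
  induction (Finset.univ : Finset (Fin n)) using Finset.induction_on_max with
  | empty => simp
  | insert a s has ih =>
    exact (integral_prod_insert_le hmeas hind h01 hF0 hFdep hstep has).trans ih

end Supermartingale

theorem Real.exp_mul_le_one_sub_add_mul_exp (t : ℝ) {v : ℝ} (hv0 : 0 ≤ v) (hv1 : v ≤ 1) :
    exp (v * t) ≤ 1 - v + v * exp t := by
  have h := convexOn_exp.2 (Set.mem_univ 0) (Set.mem_univ t) (sub_nonneg.2 hv1) hv0 (by ring)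
  simpa [smul_eq_mul] using h

theorem one_sub_mul_exp_neg_half_add_mul_exp_le_one {r : ℝ} (hr0 : 0 < r) (hr1 : r < 1) :
    (1 - r) * exp (-(1 / 2)) + r * exp ((1 - r) ^ 2 * r / 2) ≤ 1 := by
  set l := (1 - r) ^ 2 * r / 2 with hl_def
  have hl : l ≤ 1 / 2 := by
    have : (1 - r) ^ 2 * r ≤ 1 * r := mul_le_mul_of_nonneg_right (by nlinarith) hr0.le
    linarith
  have hexp_l : exp l * (1 - l) ≤ 1 := by
    calc exp l * (1 - l) ≤ exp l * exp (-l) :=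
          mul_le_mul_of_nonneg_left (one_sub_le_exp_neg l) (exp_pos l).le
      _ = 1 := by rw [← exp_add, add_neg_cancel, exp_zero]
  have hexp_half : exp (-(1 / 2)) ≤ 2 / 3 := by
    rw [exp_neg, inv_le_comm₀ (exp_pos _) (by norm_num)]
    linarith [add_one_le_exp (1 / 2 : ℝ)]
  have hpoly : l * (1 + 2 * r) ≤ 1 - r := by
    have h1 : (1 - r) * r ≤ 1 / 4 := by nlinarith [sq_nonneg (1 - 2 * r)]
    have h2 : (1 - r) * r * (1 + 2 * r) ≤ 1 / 4 * 3 :=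
      mul_le_mul h1 (by linarith) (by linarith) (by norm_num)
    nlinarith [mul_le_mul_of_nonneg_left h2 (sub_pos.2 hr1).le]
  refine le_of_mul_le_mul_right ?_ (by linarith : 0 < 1 - l)
  have hpos : 0 ≤ (1 - r) * (1 - l) := mul_nonneg (by linarith) (by linarith)
  nlinarith [mul_le_mul_of_nonneg_right hexp_half hpos]

theorem one_sub_mul_exp_add_mul_exp_le_one {r p v : ℝ} (hr0 : 0 < r) (hr1 : r < 1) (hp0 : 0 ≤ p)
    (hpr : p ≤ r) (hv0 : 0 ≤ v) (hv1 : v ≤ 1) :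
    (1 - p) * exp (-(v / 2)) + p * exp ((1 - r) ^ 2 * r / 2 * v) ≤ 1 := by
  set l := (1 - r) ^ 2 * r / 2 with hl_def
  have hl0 : 0 ≤ l := by rw [hl_def]; positivity
  have hp : (1 - p) * exp (-(1 / 2)) + p * exp l ≤ 1 := by
    have hmono : exp (-(1 / 2)) ≤ exp l := exp_le_exp.2 (by linarith)
    nlinarith [one_sub_mul_exp_neg_half_add_mul_exp_le_one hr0 hr1]
  have h0 := exp_mul_le_one_sub_add_mul_exp (-(1 / 2)) hv0 hv1
  have h1 := exp_mul_le_one_sub_add_mul_exp l hv0 hv1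
  rw [show -(v / 2) = v * -(1 / 2) by ring, mul_comm l]
  nlinarith [mul_le_mul_of_nonneg_left h0 (by linarith : 0 ≤ 1 - p),
    mul_le_mul_of_nonneg_left h1 hp0, mul_le_mul_of_nonneg_left hp hv0]

section WeightFactor

variable {n : ℕ}

noncomputable def weightFactor (l : ℝ) (w : Fin n → (Fin n → ℝ) → ℝ) (i : Fin n)
    (x : Fin n → ℝ) : ℝ :=
  exp (l * (w i x * x i) - w i x * (1 - x i) / 2)

theorem prod_weightFactor (l : ℝ) (w : Fin n → (Fin n → ℝ) → ℝ) (x : Fin n → ℝ) :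
    ∏ i, weightFactor l w i x = exp (l * ∑ i, w i x * x i - (∑ i, w i x * (1 - x i)) / 2) := by
  simp only [weightFactor, ← exp_sum, Finset.sum_sub_distrib, Finset.mul_sum, Finset.sum_div]

theorem dependsOn_weightFactor (l : ℝ) {w : Fin n → (Fin n → ℝ) → ℝ} {i : Fin n}
    (hw : DependsOn (w i) (Iio i)) : DependsOn (weightFactor l w i) (Iic i) := fun x y hxy => by
  simp only [weightFactor, hw fun j hj => hxy j (Iio_subset_Iic_self hj),
    hxy i (mem_Iic.2 le_rfl)]

theorem one_sub_mul_weightFactor_add_mul_le_one {r p : ℝ} (hr0 : 0 < r) (hr1 : r < 1)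
    (hp0 : 0 ≤ p) (hpr : p ≤ r) {w : Fin n → (Fin n → ℝ) → ℝ} {i : Fin n} {x : Fin n → ℝ}
    (hw : DependsOn (w i) (Iio i)) (hwx : w i x ∈ Icc 0 1) :
    (1 - p) * weightFactor ((1 - r) ^ 2 * r / 2) w i (Function.update x i 0) +
      p * weightFactor ((1 - r) ^ 2 * r / 2) w i (Function.update x i 1) ≤ 1 := by
  have hwi : ∀ t, w i (Function.update x i t) = w i x := fun t =>
    hw fun j hj => Function.update_of_ne (ne_of_lt hj) _ _
  simp only [weightFactor, hwi, Function.update_self]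
  convert one_sub_mul_exp_add_mul_exp_le_one hr0 hr1 hp0 hpr hwx.1 hwx.2 using 4 <;> ring

end WeightFactor

theorem measure_ge_le_exp_neg_of_integral_exp_le_one {Ω : Type*} [MeasurableSpace Ω]
    {μ : Measure Ω} [IsFiniteMeasure μ] {L : Ω → ℝ} (hint : Integrable (fun ω => exp (L ω)) μ)
    (hL : ∫ ω, exp (L ω) ∂μ ≤ 1) (B : ℝ) :
    μ {ω | B ≤ L ω} ≤ ENNReal.ofReal (exp (-B)) := by
  rw [← ofReal_measureReal (measure_ne_top _ _)]
  gcongr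
  calc μ.real {ω | B ≤ L ω} ≤ exp (-1 * B) * mgf L μ 1 :=
        measure_ge_le_exp_mul_mgf B zero_le_one (by simpa only [one_mul] using hint)
    _ ≤ exp (-B) := by
        rw [neg_one_mul]
        exact mul_le_of_le_one_right (exp_pos _).le (by simpa only [mgf, one_mul] using hL)

theorem stmt2_general {Ω : Type*} [MeasurableSpace Ω] (μ : Measure Ω) [IsProbabilityMeasure μ]
    (n : ℕ) (X : Fin n → Ω → ℝ) (r : ℝ) (hr0 : 0 < r) (hr1 : r < 1)
    (h01 : ∀ i ω, X i ω = 0 ∨ X i ω = 1)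
    (hmeas : ∀ i, Measurable (X i))
    (hind : iIndepFun X μ)
    (hE : ∀ i, ∫ ω, X i ω ∂μ ≤ r)
    (w : Fin n → (Fin n → ℝ) → ℝ)
    (hw01 : ∀ i x, w i x ∈ Set.Icc (0 : ℝ) 1)
    (hprefix : ∀ i : Fin n, ∀ x y : Fin n → ℝ,
      (∀ j : Fin n, (j : ℕ) < (i : ℕ) → x j = y j) → w i x = w i y)
    (B : ℝ) :
    μ {ω | (3 / ((1 - r) ^ 2 * r)) * B ≤ ∑ i, w i (fun j => X j ω) * X i ω ∧
        ∑ i, w i (fun j => X j ω) * (1 - X i ω) ≤ B} ≤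
      ENNReal.ofReal (Real.exp (-B)) := by
  set l := (1 - r) ^ 2 * r / 2 with hl_def
  have hw : ∀ i, DependsOn (w i) (Iio i) := fun i x y h => hprefix i x y h
  have hp0 : ∀ i, 0 ≤ ∫ ω, X i ω ∂μ := fun i =>
    integral_nonneg fun ω => by rcases h01 i ω with h | h <;> simp [h]
  have hint := integrable_comp_of_finite_range (μ := μ) (measurable_pi_lambda _ hmeas)
    (finite_range_of_forall_apply_mem (s := {0, 1}) (by simp) fun ω j => h01 j ω)
    fun x => ∏ i, weightFactor l w i x
  have hmean := integral_prod_le_one (F := weightFactor l w) hmeas hind h01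
    (fun _ _ => (exp_pos _).le) (fun i => dependsOn_weightFactor l (hw i))
    fun i x => one_sub_mul_weightFactor_add_mul_le_one hr0 hr1 (hp0 i) (hE i) (hw i) (hw01 i x)
  simp only [prod_weightFactor] at hint hmean
  refine (measure_mono fun ω hω => ?_).trans
    (measure_ge_le_exp_neg_of_integral_exp_le_one hint hmean B)
  have hlc : l * (3 / ((1 - r) ^ 2 * r)) * B = 3 / 2 * B := by
    have : 1 - r ≠ 0 := by linarith
    rw [hl_def]
    field_simp
  have hl : 0 ≤ l := by positivity
  obtain ⟨h1, h0⟩ := hω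
  simp only [mem_ofPred_eq]
  nlinarith [mul_le_mul_of_nonneg_left h1 hl]

theorem stmt2 {Ω : Type*} [MeasurableSpace Ω] (μ : Measure Ω) [IsProbabilityMeasure μ]
    (n : ℕ) (X : Fin n → Ω → ℝ) (r : ℝ) (hr0 : 0 < r) (hr1 : r < 1)
    (h01 : ∀ i ω, X i ω = 0 ∨ X i ω = 1)
    (hmeas : ∀ i, Measurable (X i))
    (hind : iIndepFun X μ)
    (hE : ∀ i, ∫ ω, X i ω ∂μ ≤ r)
    (w : Fin n → (Fin n → ℝ) → ℝ)
    (hw01 : ∀ i x, w i x ∈ Set.Icc (0 : ℝ) 1)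
    (hprefix : ∀ i : Fin n, ∀ x y : Fin n → ℝ,
      (∀ j : Fin n, (j : ℕ) < (i : ℕ) → x j = y j) → w i x = w i y)
    (B : ℝ) (hB : 1 ≤ B) :
    μ {ω | (3 / ((1 - r) ^ 2 * r)) * B ≤ ∑ i, w i (fun j => X j ω) * X i ω ∧
        ∑ i, w i (fun j => X j ω) * (1 - X i ω) ≤ B} ≤
      ENNReal.ofReal (Real.exp (-B)) :=
  stmt2_general μ n X r hr0 hr1 h01 hmeas hind hE w hw01 hprefix B
end

section
/- Let G = (V,E) be a finite graph with inductive independence number ρ with respect to an ordering ≺, i.e., for every independent set S and every vertex v, |{u ∈ S : u ≻ v, {u,v} ∈ E}| ≤ ρ. Then the greedy algorithm that processes vertices in increasing ≺-order and adds a vertex whenever it has no neighbor among previously added vertices outputs an independent set I with |I| ≥ |S|/ρ for every independent set S of G. In particular, greedy is a ρ-approximation for maximum independent set. -/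
/-!
Charge every vertex of `S` that greedy rejected to an earlier neighbour in `I`, which exists
because greedy rejected it, and every vertex of `S ∩ I` to itself. A vertex `i ∈ I` is then
charged either only by itself (if `i ∈ S`, since `S` is independent) or only by later
neighbours in `S`, of which there are at most `ρ`.
-/

open Finset

namespace SimpleGraph

variable {V : Type*} [LinearOrder V] {G : SimpleGraph V}

theorem not_adj_of_forall_lt_not_adj {I : Finset V}
    (hI : ∀ v ∈ I, ∀ u ∈ I, u < v → ¬ G.Adj u v) : ∀ u ∈ I, ∀ v ∈ I, ¬ G.Adj u v := by
  intro u hu v hv hadj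
  rcases lt_trichotomy u v with h | rfl | h
  · exact hI v hv u hu h hadj
  · exact hadj.ne rfl
  · exact hI u hu v hv h hadj.symm

variable [DecidableRel G.Adj] {S : Finset V} {ρ : ℕ}

theorem card_filter_eq_or_lt_adj_le (hS : ∀ u ∈ S, ∀ v ∈ S, ¬ G.Adj u v) (hρ : 1 ≤ ρ)
    (hupper : ∀ v, (S.filter fun u => v < u ∧ G.Adj u v).card ≤ ρ) (i : V) :
    (S.filter fun s => s = i ∨ i < s ∧ G.Adj s i).card ≤ ρ := by
  by_cases hi : i ∈ S
  · have hsub : (S.filter fun s => s = i ∨ i < s ∧ G.Adj s i) ⊆ {i} := by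
      intro s hs
      simp only [mem_filter] at hs
      rcases hs with ⟨hs, rfl | ⟨-, hadj⟩⟩
      · exact mem_singleton_self s
      · exact (hS s hs i hi hadj).elim
    calc _ ≤ ({i} : Finset V).card := card_le_card hsub
      _ = 1 := card_singleton i
      _ ≤ ρ := hρ
  · have hsub : (S.filter fun s => s = i ∨ i < s ∧ G.Adj s i) ⊆
        S.filter fun u => i < u ∧ G.Adj u i := by
      intro s hs
      simp only [mem_filter] at hs ⊢
      rcases hs with ⟨hs, rfl | h⟩
      · exact absurd hs hi
      · exact ⟨hs, h⟩
    exact (card_le_card hsub).trans (hupper i)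

theorem card_le_mul_card_of_forall_mem_or_exists_lt_adj {I : Finset V}
    (hS : ∀ u ∈ S, ∀ v ∈ S, ¬ G.Adj u v) (hρ : 1 ≤ ρ)
    (hupper : ∀ v, (S.filter fun u => v < u ∧ G.Adj u v).card ≤ ρ)
    (hdom : ∀ s ∈ S, s ∈ I ∨ ∃ u ∈ I, u < s ∧ G.Adj u s) : S.card ≤ ρ * I.card := by
  have hcover : S ⊆ I.biUnion fun i => S.filter fun s => s = i ∨ i < s ∧ G.Adj s i := by
    intro s hs
    simp only [mem_biUnion, mem_filter]
    rcases hdom s hs with hsI | ⟨u, huI, hlt, hadj⟩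
    · exact ⟨s, hsI, hs, .inl rfl⟩
    · exact ⟨u, huI, hs, .inr ⟨hlt, hadj.symm⟩⟩
  calc S.card ≤ ∑ i ∈ I, (S.filter fun s => s = i ∨ i < s ∧ G.Adj s i).card :=
        (card_le_card hcover).trans card_biUnion_le
    _ ≤ ∑ _i ∈ I, ρ := sum_le_sum fun i _ => card_filter_eq_or_lt_adj_le hS hρ hupper i
    _ = ρ * I.card := by rw [sum_const, smul_eq_mul, mul_comm]

end SimpleGraph

open SimpleGraph in
theorem stmt3_general {V : Type*} [LinearOrder V]
    (G : SimpleGraph V) [DecidableRel G.Adj] (ρ : ℕ) (hρ : 1 ≤ ρ)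
    (hindnum : ∀ S : Finset V, (∀ u ∈ S, ∀ v ∈ S, ¬ G.Adj u v) →
      ∀ v : V, (S.filter fun u => v < u ∧ G.Adj u v).card ≤ ρ)
    (I : Finset V)
    (hgreedy : ∀ v : V, v ∈ I ↔ ∀ u ∈ I, u < v → ¬ G.Adj u v) :
    (∀ u ∈ I, ∀ v ∈ I, ¬ G.Adj u v) ∧
      ∀ S : Finset V, (∀ u ∈ S, ∀ v ∈ S, ¬ G.Adj u v) → S.card ≤ ρ * I.card := by
  have hdom : ∀ s, s ∈ I ∨ ∃ u ∈ I, u < s ∧ G.Adj u s := by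
    intro s
    by_contra! h
    exact h.1 ((hgreedy s).2 h.2)
  refine ⟨not_adj_of_forall_lt_not_adj fun v hv => (hgreedy v).1 hv, fun S hS => ?_⟩
  exact card_le_mul_card_of_forall_mem_or_exists_lt_adj hS hρ (hindnum S hS) fun s _ => hdom s

theorem stmt3 {V : Type*} [Fintype V] [DecidableEq V] [LinearOrder V]
    (G : SimpleGraph V) [DecidableRel G.Adj] (ρ : ℕ) (hρ : 1 ≤ ρ)
    (hindnum : ∀ S : Finset V, (∀ u ∈ S, ∀ v ∈ S, ¬ G.Adj u v) →
      ∀ v : V, (S.filter fun u => v < u ∧ G.Adj u v).card ≤ ρ)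
    (I : Finset V)
    (hgreedy : ∀ v : V, v ∈ I ↔ ∀ u ∈ I, u < v → ¬ G.Adj u v) :
    (∀ u ∈ I, ∀ v ∈ I, ¬ G.Adj u v) ∧
      ∀ S : Finset V, (∀ u ∈ S, ∀ v ∈ S, ¬ G.Adj u v) → S.card ≤ ρ * I.card :=
  stmt3_general G ρ hρ hindnum I hgreedy
end

section
/- Suppose for each vertex v in a finite set V, integer-valued nonnegative weights w^I(v) and w^S(v) satisfy the stochastic similarity condition P(w^S(v) = b) ≥ (1/c) · P(w^I(v) = b) for all integers b > 0 and some c ≥ 1, and the pairs (w^I(v), w^S(v)) are independent across distinct vertices v. Then for any graph G on V, E[OPT(w^S)] ≥ (1/c) · E[OPT(w^I)], where OPT(w) denotes the maximum weight of an independent set of G under weights w. -/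
/-! Let `ρ v` be the law of `wI v` thinned to `0` with probability `1 - 1 / c`. The similarity
condition says `ρ v {b} ≤ P(wS v = b)` for every `b > 0`, so `ρ v` is stochastically dominated by
the law of `wS v`, and since `OPT` is monotone, replacing the laws one coordinate at a time shows
that the expectation of `OPT` under `∏ v, ρ v` is at most `E[OPT(wS)]`.

On the other hand, a sample of `∏ v, ρ v` is a sample of `wI` restricted to a random set `S`
containing each vertex independently with probability `1 / c`. For an optimal independent set `U`
of `wI`, the set `U ∩ S` is still independent and has expected weight `OPT(wI) / c`; hence the
expectation of `OPT` under `∏ v, ρ v` is at least `E[OPT(wI)] / c`. -/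

open MeasureTheory ProbabilityTheory
open scoped ENNReal

/-- The maximum weight of an independent set of `G` under weights `w`. -/
def optN {V : Type*} [Fintype V] [DecidableEq V] (G : SimpleGraph V)
    [DecidableRel G.Adj] (w : V → ℕ) : ℕ :=
  (Finset.univ : Finset V).powerset.sup fun S =>
    if ∀ u ∈ S, ∀ v ∈ S, ¬ G.Adj u v then ∑ v ∈ S, w v else 0

open Finset

lemma sum_powerset_ite_mem_pow_mul_pow {ι R : Type*} [Fintype ι] [DecidableEq ι]
    [CommSemiring R] {p q : R} (hpq : p + q = 1) (v : ι) :
    ∑ S ∈ (univ : Finset ι).powerset, (if v ∈ S then p ^ #S * q ^ #Sᶜ else 0) = p := by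
  -- the factor `0` at `v` discards the subsets missing `v`
  have hterm : ∀ S : Finset ι, (if v ∈ S then p ^ #S * q ^ #Sᶜ else 0) =
      (∏ _ ∈ S, p) * ∏ w ∈ univ \ S, if w = v then 0 else q := by
    intro S
    split_ifs with hv
    · rw [prod_const, ← compl_eq_univ_sdiff, prod_congr rfl fun w hw => if_neg ?_, prod_const]
      rintro rfl
      exact mem_compl.1 hw hv
    · rw [prod_eq_zero (f := fun w => if w = v then (0 : R) else q)
        (mem_sdiff.2 ⟨mem_univ v, hv⟩) (if_pos rfl), mul_zero]
  rw [sum_congr rfl fun S _ => hterm S, ← prod_add, ← mul_prod_erase univ _ (mem_univ v),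
    if_pos rfl, add_zero, prod_eq_one fun w hw => by rw [if_neg (ne_of_mem_erase hw), hpq],
    mul_one]

section IndependentSets

variable {V : Type*} [Fintype V] [DecidableEq V] (G : SimpleGraph V) [DecidableRel G.Adj]

lemma optN_mono : Monotone (optN G) := fun _ _ hxy =>
  Finset.sup_mono_fun fun S _ => by
    split
    · exact sum_le_sum fun v _ => hxy v
    · exact le_rfl

lemma sum_le_optN {U : Finset V} (hU : ∀ u ∈ U, ∀ v ∈ U, ¬ G.Adj u v) (x : V → ℕ) :
    ∑ v ∈ U, x v ≤ optN G x := by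
  rw [optN]
  simpa only [if_pos hU] using
    le_sup (f := fun S => if ∀ u ∈ S, ∀ v ∈ S, ¬ G.Adj u v then ∑ v ∈ S, x v else 0)
      (mem_powerset.2 (subset_univ U))

lemma exists_optN_eq_sum (x : V → ℕ) :
    ∃ U : Finset V, (∀ u ∈ U, ∀ v ∈ U, ¬ G.Adj u v) ∧ optN G x = ∑ v ∈ U, x v := by
  obtain ⟨U, -, hU⟩ := exists_mem_eq_sup (univ : Finset V).powerset (powerset_nonempty _)
    fun S => if ∀ u ∈ S, ∀ v ∈ S, ¬ G.Adj u v then ∑ v ∈ S, x v else 0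
  by_cases hind : ∀ u ∈ U, ∀ v ∈ U, ¬ G.Adj u v
  · exact ⟨U, hind, by rw [optN, hU, if_pos hind]⟩
  · exact ⟨∅, by simp, by rw [optN, hU, if_neg hind, sum_empty]⟩

lemma mul_optN_le_sum_optN_indicator {p q : ℝ≥0∞} (hpq : p + q = 1) (x : V → ℕ) :
    p * optN G x ≤ ∑ S ∈ (univ : Finset V).powerset,
      p ^ #S * q ^ #Sᶜ * optN G ((S : Set V).indicator x) := by
  obtain ⟨U, hU, hx⟩ := exists_optN_eq_sum G x
  calc p * (optN G x : ℝ≥0∞)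
      = ∑ v ∈ U, (∑ S ∈ univ.powerset, if v ∈ S then p ^ #S * q ^ #Sᶜ else 0) * x v := by
        simp only [sum_powerset_ite_mem_pow_mul_pow hpq, hx, Nat.cast_sum, mul_sum]
    _ = ∑ S ∈ (univ : Finset V).powerset,
          p ^ #S * q ^ #Sᶜ * ∑ v ∈ U, (((S : Set V).indicator x v : ℕ) : ℝ≥0∞) := by
        simp_rw [sum_mul, mul_sum]
        rw [sum_comm]
        refine sum_congr rfl fun S _ => sum_congr rfl fun v _ => ?_
        by_cases hv : v ∈ S <;> simp [hv]
    _ ≤ _ := by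
        gcongr with S
        exact_mod_cast sum_le_optN G hU _

end IndependentSets

lemma Monotone.lintegral_le_of_measure_singleton_le {m₁ m₂ : Measure ℕ}
    [IsProbabilityMeasure m₁] [IsProbabilityMeasure m₂] (h : ∀ b, 0 < b → m₁ {b} ≤ m₂ {b})
    {g : ℕ → ℝ≥0∞} (hg : Monotone g) :
    ∫⁻ b, g b ∂m₁ ≤ ∫⁻ b, g b ∂m₂ := by
  have hsplit : ∀ (m : Measure ℕ) [IsProbabilityMeasure m],
      ∫⁻ b, g b ∂m = g 0 + ∑' b, (g b - g 0) * m {b} := by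
    intro m _
    calc ∫⁻ b, g b ∂m = ∫⁻ b, g 0 + (g b - g 0) ∂m := by
          simp only [add_tsub_cancel_of_le (hg (Nat.zero_le _))]
      _ = g 0 + ∑' b, (g b - g 0) * m {b} := by
          rw [lintegral_add_left measurable_const, lintegral_const, measure_univ, mul_one,
            lintegral_countable']
  rw [hsplit m₁, hsplit m₂]
  refine add_le_add_right (ENNReal.tsum_le_tsum fun b => ?_) _
  rcases Nat.eq_zero_or_pos b with rfl | hb
  · simp
  · exact mul_le_mul_right (h b hb) _

lemma Monotone.lmarginal {δ : Type*} [DecidableEq δ] {X : δ → Type*}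
    [∀ i, MeasurableSpace (X i)] [∀ i, Preorder (X i)] (μ : ∀ i, Measure (X i)) (s : Finset δ)
    {f : (∀ i, X i) → ℝ≥0∞} (hf : Monotone f) :
    Monotone (∫⋯∫⁻_s, f ∂μ) := fun _ _ hxy =>
  lintegral_mono fun _ => hf fun i => by
    simp only [Function.updateFinset]
    split
    · exact le_rfl
    · exact hxy i

lemma Monotone.lintegral_pi_le_of_measure_singleton_le {ι : Type*} [Fintype ι] [DecidableEq ι]
    {μ ν : ι → Measure ℕ} [∀ i, IsProbabilityMeasure (μ i)] [∀ i, IsProbabilityMeasure (ν i)]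
    (h : ∀ i, ∀ b, 0 < b → μ i {b} ≤ ν i {b}) {f : (ι → ℕ) → ℝ≥0∞} (hf : Monotone f) :
    ∫⁻ x, f x ∂Measure.pi μ ≤ ∫⁻ x, f x ∂Measure.pi ν := by
  have hfm : Measurable f := measurable_of_countable f
  have hmarg : ∀ (s : Finset ι) x, (∫⋯∫⁻_s, f ∂μ) x ≤ (∫⋯∫⁻_s, f ∂ν) x := by
    intro s
    induction s using Finset.induction with
    | empty => simp [lmarginal_empty]
    | @insert i s hi ih =>
      intro x
      rw [lmarginal_insert _ hfm hi, lmarginal_insert _ hfm hi]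
      calc ∫⁻ b, (∫⋯∫⁻_s, f ∂μ) (Function.update x i b) ∂μ i
          ≤ ∫⁻ b, (∫⋯∫⁻_s, f ∂ν) (Function.update x i b) ∂μ i :=
            lintegral_mono fun b => ih _
        _ ≤ ∫⁻ b, (∫⋯∫⁻_s, f ∂ν) (Function.update x i b) ∂ν i :=
            ((hf.lmarginal ν s).comp Function.update_mono).lintegral_le_of_measure_singleton_le
              (h i)
  rw [lintegral_eq_lmarginal_univ 0, lintegral_eq_lmarginal_univ 0]
  exact hmarg univ 0

section Mixture

variable {ι α : Type*} [MeasurableSpace α] [Zero α]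

lemma Set.measurable_indicator (s : Set ι) : Measurable fun x : ι → α => s.indicator x :=
  measurable_pi_lambda _ fun i => by
    by_cases hi : i ∈ s
    · simpa [hi] using measurable_pi_apply i
    · simp [hi]

variable [Fintype ι] [DecidableEq ι]

lemma MeasureTheory.Measure.pi_map_indicator_univ_pi (μ : ι → Measure α)
    [∀ i, IsProbabilityMeasure (μ i)] (S : Finset ι) {s : ι → Set α}
    (hs : ∀ i, MeasurableSet (s i)) :
    (Measure.pi μ).map (fun x => (S : Set ι).indicator x) (Set.univ.pi s) =
      (∏ i ∈ S, μ i (s i)) * ∏ i ∈ univ \ S, Measure.dirac 0 (s i) := by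
  have hpre : (fun x => (S : Set ι).indicator x) ⁻¹' Set.univ.pi s =
      Set.univ.pi fun i => if i ∈ S then s i else {_x | (0 : α) ∈ s i} := by
    ext x
    simp only [Set.mem_preimage, Set.mem_pi, Set.mem_univ, true_implies]
    refine forall_congr' fun i => ?_
    by_cases hi : i ∈ S <;> simp [hi]
  rw [Measure.map_apply (Set.measurable_indicator _) (.univ_pi hs), hpre, Measure.pi_pi,
    ← prod_mul_prod_compl S, compl_eq_univ_sdiff]
  congr 1 <;> refine prod_congr rfl fun i hi => ?_
  · simp [hi]
  · rw [if_neg (mem_sdiff.1 hi).2, Measure.dirac_apply' _ (hs i)]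
    by_cases h0 : (0 : α) ∈ s i <;> simp [h0]

lemma MeasureTheory.Measure.pi_eq_sum_powerset_smul_map_indicator (μ ν : ι → Measure α)
    [∀ i, IsProbabilityMeasure (μ i)] [∀ i, SigmaFinite (ν i)] {a b : ℝ≥0∞}
    (hν : ∀ i, ν i = a • μ i + b • Measure.dirac 0) :
    Measure.pi ν = ∑ S ∈ (univ : Finset ι).powerset,
      (a ^ #S * b ^ #Sᶜ) • (Measure.pi μ).map (fun x => (S : Set ι).indicator x) := by
  refine Measure.pi_eq fun s hs => ?_
  simp only [Measure.finsetSum_apply, Measure.smul_apply, smul_eq_mul,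
    Measure.pi_map_indicator_univ_pi μ _ hs, hν, Measure.add_apply, Finset.prod_add]
  refine Finset.sum_congr rfl fun S _ => ?_
  rw [prod_mul_distrib, prod_mul_distrib, prod_const, prod_const, ← compl_eq_univ_sdiff]
  ring

end Mixture

lemma mul_lintegral_optN_le_lintegral_pi {V : Type*} [Fintype V] [DecidableEq V]
    (G : SimpleGraph V) [DecidableRel G.Adj] {μ ν : V → Measure ℕ}
    [∀ v, IsProbabilityMeasure (μ v)] [∀ v, SigmaFinite (ν v)] {p q : ℝ≥0∞} (hpq : p + q = 1)
    (hν : ∀ v, ν v = p • μ v + q • Measure.dirac 0) :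
    p * ∫⁻ x, (optN G x : ℝ≥0∞) ∂Measure.pi μ ≤ ∫⁻ x, (optN G x : ℝ≥0∞) ∂Measure.pi ν := by
  rw [Measure.pi_eq_sum_powerset_smul_map_indicator μ ν hν, lintegral_finsetSum_measure,
    ← lintegral_const_mul _ (measurable_of_countable _)]
  calc ∫⁻ x, p * optN G x ∂Measure.pi μ
      ≤ ∫⁻ x, ∑ S ∈ (univ : Finset V).powerset,
          p ^ #S * q ^ #Sᶜ * optN G ((S : Set V).indicator x) ∂Measure.pi μ :=
        lintegral_mono (mul_optN_le_sum_optN_indicator G hpq)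
    _ = _ := by
        rw [lintegral_finsetSum _ fun _ _ => measurable_of_countable _]
        refine sum_congr rfl fun S _ => ?_
        rw [lintegral_smul_measure, lintegral_map (measurable_of_countable _)
          (Set.measurable_indicator _), lintegral_const_mul _ (measurable_of_countable _),
          smul_eq_mul]

lemma ProbabilityTheory.iIndepFun.lintegral_comp_eq_lintegral_pi {Ω ι α : Type*}
    [MeasurableSpace Ω] [MeasurableSpace α] [Fintype ι] {μ : Measure Ω} {X : ι → Ω → α}
    (h : iIndepFun X μ) (hX : ∀ i, Measurable (X i)) {f : (ι → α) → ℝ≥0∞} (hf : Measurable f) :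
    ∫⁻ ω, f (fun i => X i ω) ∂μ = ∫⁻ x, f x ∂Measure.pi fun i => μ.map (X i) := by
  rw [← h.map_fun_eq_pi_map fun i => (hX i).aemeasurable,
    lintegral_map hf (measurable_pi_lambda _ hX)]

theorem lintegral_optN_pi_le_mul {V : Type*} [Fintype V] [DecidableEq V] (G : SimpleGraph V)
    [DecidableRel G.Adj] {μ ν : V → Measure ℕ} [∀ v, IsProbabilityMeasure (μ v)]
    [∀ v, IsProbabilityMeasure (ν v)] {C : ℝ≥0∞} (hC : 1 ≤ C) (hC_ne_top : C ≠ ⊤)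
    (h : ∀ v b, 0 < b → μ v {b} ≤ C * ν v {b}) :
    ∫⁻ x, (optN G x : ℝ≥0∞) ∂Measure.pi μ ≤ C * ∫⁻ x, (optN G x : ℝ≥0∞) ∂Measure.pi ν := by
  have hC0 : C ≠ 0 := (zero_lt_one.trans_le hC).ne'
  have hpq : C⁻¹ + (1 - C⁻¹) = 1 := add_tsub_cancel_of_le (ENNReal.inv_le_one.2 hC)
  -- `μ v` thinned to `0` with probability `1 - C⁻¹`
  set ρ : V → Measure ℕ := fun v => C⁻¹ • μ v + (1 - C⁻¹) • Measure.dirac 0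
  have : ∀ v, IsProbabilityMeasure (ρ v) := fun v => ⟨by simp [ρ, hpq]⟩
  have hρ : ∀ v b, 0 < b → ρ v {b} ≤ ν v {b} := fun v b hb => by
    calc ρ v {b} = C⁻¹ * μ v {b} := by simp [ρ, hb.ne']
      _ ≤ C⁻¹ * (C * ν v {b}) := by gcongr; exact h v b hb
      _ = ν v {b} := by rw [← mul_assoc, ENNReal.inv_mul_cancel hC0 hC_ne_top, one_mul]
  calc ∫⁻ x, (optN G x : ℝ≥0∞) ∂Measure.pi μ
      = C * (C⁻¹ * ∫⁻ x, (optN G x : ℝ≥0∞) ∂Measure.pi μ) := by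
        rw [← mul_assoc, ENNReal.mul_inv_cancel hC0 hC_ne_top, one_mul]
    _ ≤ C * ∫⁻ x, (optN G x : ℝ≥0∞) ∂Measure.pi ρ :=
        mul_le_mul_right (mul_lintegral_optN_le_lintegral_pi G hpq fun _ => rfl) C
    _ ≤ C * ∫⁻ x, (optN G x : ℝ≥0∞) ∂Measure.pi ν :=
        mul_le_mul_right
          ((Nat.mono_cast.comp (optN_mono G)).lintegral_pi_le_of_measure_singleton_le hρ) C

theorem stmt4 {Ω V : Type*} [MeasurableSpace Ω] (μ : Measure Ω) [IsProbabilityMeasure μ]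
    [Fintype V] [DecidableEq V] (G : SimpleGraph V) [DecidableRel G.Adj]
    (wI wS : V → Ω → ℕ) (c : ℝ) (hc : 1 ≤ c)
    (hmeasI : ∀ v, Measurable (wI v)) (hmeasS : ∀ v, Measurable (wS v))
    (hsim : ∀ v : V, ∀ b : ℕ, 0 < b →
      μ {ω | wI v ω = b} ≤ ENNReal.ofReal c * μ {ω | wS v ω = b})
    (hindep : iIndepFun (fun v ω => (wI v ω, wS v ω)) μ) :
    ∫⁻ ω, (optN G (fun v => wI v ω) : ℝ≥0∞) ∂μ ≤
      ENNReal.ofReal c * ∫⁻ ω, (optN G (fun v => wS v ω) : ℝ≥0∞) ∂μ := by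
  have hmeasOptN : Measurable fun x : V → ℕ => (optN G x : ℝ≥0∞) := measurable_of_countable _
  have hindepI : iIndepFun wI μ := hindep.comp (fun _ => Prod.fst) fun _ => measurable_fst
  have hindepS : iIndepFun wS μ := hindep.comp (fun _ => Prod.snd) fun _ => measurable_snd
  have := fun v => Measure.isProbabilityMeasure_map (μ := μ) (hmeasI v).aemeasurable
  have := fun v => Measure.isProbabilityMeasure_map (μ := μ) (hmeasS v).aemeasurable
  rw [hindepI.lintegral_comp_eq_lintegral_pi hmeasI hmeasOptN,
    hindepS.lintegral_comp_eq_lintegral_pi hmeasS hmeasOptN]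
  refine lintegral_optN_pi_le_mul G (ENNReal.one_le_ofReal.2 hc) ENNReal.ofReal_ne_top
    fun v b hb => ?_
  rw [Measure.map_apply (hmeasI v) (measurableSet_singleton b),
    Measure.map_apply (hmeasS v) (measurableSet_singleton b)]
  exact hsim v b hb
end

section
/- Consider the recursively nested interval instance: n/2 pairs of disjoint intervals are presented online, where each new pair is inserted uniformly at random into one of the two intervals of the previous pair. Every realization of this instance contains an independent set (pairwise disjoint intervals) of size n/2 + 1, yet for any deterministic online algorithm that must irrevocably accept or reject each interval upon arrival while keeping accepted intervals pairwise disjoint, the expected number of accepted intervals is at most 2. -/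
/-- In the recursively nested interval instance with coin flips `b` (pair `t+1` is
inserted into the side `b t` of pair `t`), an interval `(t, s)` conflicts with a
later interval `(t', s')` (with `t < t'`) iff `s = b t`. -/
def IntervalConflict {m : ℕ} (b : Fin m → Bool) (p q : Fin m × Bool) : Prop :=
  (p.1 < q.1 ∧ p.2 = b p.1) ∨ (q.1 < p.1 ∧ q.2 = b q.1)

private lemma key_bound : ∀ (m : ℕ) (A : (Fin m → Bool) → Finset (Fin m × Bool)),
    (∀ b b' : Fin m → Bool, ∀ p : Fin m × Bool,
      (∀ i : Fin m, (i : ℕ) < (p.1 : ℕ) → b i = b' i) → (p ∈ A b ↔ p ∈ A b')) →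
    (∀ b : Fin m → Bool, ∀ p ∈ A b, ∀ q ∈ A b, p ≠ q → ¬ IntervalConflict b p q) →
    ∑ b : Fin m → Bool, (A b).card ≤ 2 * 2 ^ m := by
  intro m
  induction m with
  | zero =>
    intro A _ _
    calc ∑ b : Fin 0 → Bool, (A b).card
        ≤ ∑ b : Fin 0 → Bool, Fintype.card (Fin 0 × Bool) :=
          Finset.sum_le_sum fun b _ => Finset.card_le_univ _
      _ ≤ 2 * 2 ^ 0 := by simp
  | succ m ih =>
    intro A hon hfe
    classical
    -- the embedding of the later pairs
    set e : Fin m × Bool → Fin (m + 1) × Bool := fun q => (q.1.succ, q.2) with he_def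
    have he : Function.Injective e := by
      intro a b hab
      simp only [he_def, Prod.ext_iff] at hab
      exact Prod.ext (Fin.succ_injective _ hab.1) hab.2
    -- the shifted algorithm
    set A' : Bool → (Fin m → Bool) → Finset (Fin m × Bool) :=
      fun v b' => (A (Fin.cons v b')).preimage e he.injOn with hA'_def
    have hmem : ∀ v b' q, q ∈ A' v b' ↔ (q.1.succ, q.2) ∈ A (Fin.cons v b') := by
      intro v b' q; simp [hA'_def, he_def, Finset.mem_preimage]
    -- online property of the shifted algorithm
    have hon' : ∀ v : Bool, ∀ b' b'' : Fin m → Bool, ∀ q : Fin m × Bool,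
        (∀ i : Fin m, (i : ℕ) < (q.1 : ℕ) → b' i = b'' i) →
        (q ∈ A' v b' ↔ q ∈ A' v b'') := by
      intro v b' b'' q hagree
      rw [hmem, hmem]
      apply hon
      intro i hi
      induction i using Fin.cases with
      | zero => simp
      | succ j =>
        simp only [Fin.cons_succ]
        apply hagree
        simpa [Fin.val_succ] using hi
    -- feasibility of the shifted algorithm
    have hfe' : ∀ v : Bool, ∀ b' : Fin m → Bool, ∀ p ∈ A' v b', ∀ q ∈ A' v b',
        p ≠ q → ¬ IntervalConflict b' p q := by
      intro v b' p hp q hq hpq hc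
      rw [hmem] at hp hq
      refine hfe (Fin.cons v b') _ hp _ hq ?_ ?_
      · intro h
        apply hpq
        simp only [Prod.ext_iff] at h
        exact Prod.ext (Fin.succ_injective _ h.1) h.2
      · rcases hc with ⟨hlt, heq⟩ | ⟨hlt, heq⟩
        · exact Or.inl ⟨Fin.succ_lt_succ_iff.2 hlt, by simpa [Fin.cons_succ] using heq⟩
        · exact Or.inr ⟨Fin.succ_lt_succ_iff.2 hlt, by simpa [Fin.cons_succ] using heq⟩
    -- membership of the first pair does not depend on b
    have hzero : ∀ (b : Fin (m + 1) → Bool) (v : Bool),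
        ((0 : Fin (m + 1)), v) ∈ A b ↔ ((0 : Fin (m + 1)), v) ∈ A (fun _ => false) := by
      intro b v
      apply hon
      intro i hi
      simp at hi
    -- count of accepted first-pair intervals (constant)
    set a : Bool → ℕ := fun v =>
      if ((0 : Fin (m + 1)), v) ∈ A (fun _ => false) then 1 else 0 with ha_def
    -- splitting the card of A b
    have hcardzero : ∀ b : Fin (m + 1) → Bool,
        ((A b).filter fun p => p.1 = 0).card = a false + a true := by
      intro b
      have hset : ((A b).filter fun p => p.1 = 0)
          = ((A b).filter (· = ((0 : Fin (m + 1)), false)))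
            ∪ ((A b).filter (· = ((0 : Fin (m + 1)), true))) := by
        rw [← Finset.filter_or]
        apply Finset.filter_congr
        rintro ⟨t, s⟩ _
        cases s <;> simp [Prod.ext_iff]
      rw [hset, Finset.card_union_of_disjoint, Finset.filter_eq', Finset.filter_eq']
      · simp only [apply_ite Finset.card, Finset.card_singleton, Finset.card_empty, ha_def,
          hzero b]
      · simp only [Finset.disjoint_left, Finset.mem_filter]
        rintro p ⟨-, rfl⟩ ⟨-, h⟩
        simp at h
    -- if the first-pair interval on the coin side is accepted, nothing later is
    have hblock : ∀ v : Bool, ((0 : Fin (m + 1)), v) ∈ A (fun _ => false) →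
        ∀ b' : Fin m → Bool, ((A (Fin.cons v b')).filter fun p => ¬ p.1 = 0) = ∅ := by
      intro v hv b'
      rw [Finset.filter_eq_empty_iff]
      rintro q hq hq0
      have hp : ((0 : Fin (m + 1)), v) ∈ A (Fin.cons v b') := (hzero _ v).2 hv
      refine hfe (Fin.cons v b') _ hp _ hq ?_ ?_
      · intro h
        exact hq0 (by rw [← h])
      · exact Or.inl ⟨Fin.pos_of_ne_zero hq0, by simp⟩
    -- the later part has the same card as the shifted algorithm's acceptance
    have hrest : ∀ (v : Bool) (b' : Fin m → Bool),
        ((A (Fin.cons v b')).filter fun p => ¬ p.1 = 0).card = (A' v b').card := by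
      intro v b'
      rw [hA'_def]
      rw [Finset.card_preimage]
      congr 1
      apply Finset.filter_congr
      rintro ⟨t, s⟩ _
      simp only [Set.mem_range, he_def]
      constructor
      · intro ht
        exact ⟨(t.pred ht, s), by simp [Fin.succ_pred]⟩
      · rintro ⟨⟨u, s'⟩, h⟩
        simp only [Prod.ext_iff] at h
        rw [← h.1]
        exact (Fin.succ_ne_zero u)
    -- per-branch bound
    have hbranch : ∀ v : Bool,
        2 ^ (m + 1) * a v + ∑ b' : Fin m → Bool,
          ((A (Fin.cons v b')).filter fun p => ¬ p.1 = 0).card ≤ 2 ^ (m + 1) := by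
      intro v
      by_cases hv : ((0 : Fin (m + 1)), v) ∈ A (fun _ => false)
      · have : ∀ b' : Fin m → Bool,
            ((A (Fin.cons v b')).filter fun p => ¬ p.1 = 0).card = 0 := by
          intro b'; rw [hblock v hv b']; simp
        simp [ha_def, hv, Finset.sum_congr rfl fun b' _ => this b']
      · have h1 : ∑ b' : Fin m → Bool,
            ((A (Fin.cons v b')).filter fun p => ¬ p.1 = 0).card
            = ∑ b' : Fin m → Bool, (A' v b').card :=
          Finset.sum_congr rfl fun b' _ => hrest v b'
        have h2 := ih (A' v) (hon' v) (hfe' v)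
        simp only [ha_def, hv, if_false, Nat.mul_zero, Nat.zero_add, h1]
        calc ∑ b' : Fin m → Bool, (A' v b').card ≤ 2 * 2 ^ m := h2
          _ = 2 ^ (m + 1) := by ring
    -- assembling
    have hsplit : ∀ b : Fin (m + 1) → Bool,
        (A b).card = (a false + a true) +
          ((A b).filter fun p => ¬ p.1 = 0).card := by
      intro b
      rw [← hcardzero b]
      exact (Finset.card_filter_add_card_filter_not (fun p : Fin (m + 1) × Bool => p.1 = 0)).symm
    have hsum : ∑ b : Fin (m + 1) → Bool, ((A b).filter fun p => ¬ p.1 = 0).card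
        = ∑ v : Bool, ∑ b' : Fin m → Bool,
            ((A (Fin.cons v b')).filter fun p => ¬ p.1 = 0).card := by
      rw [← Equiv.sum_comp (Fin.consEquiv fun _ => Bool)
        (fun b => ((A b).filter fun p => ¬ p.1 = 0).card), Fintype.sum_prod_type]
      rfl
    have hcardfun : Fintype.card (Fin (m + 1) → Bool) = 2 ^ (m + 1) := by
      simp [Fintype.card_fun]
    calc ∑ b : Fin (m + 1) → Bool, (A b).card
        = ∑ b : Fin (m + 1) → Bool, ((a false + a true) +
            ((A b).filter fun p => ¬ p.1 = 0).card) :=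
          Finset.sum_congr rfl fun b _ => hsplit b
      _ = 2 ^ (m + 1) * (a false + a true) +
            ∑ b : Fin (m + 1) → Bool, ((A b).filter fun p => ¬ p.1 = 0).card := by
          rw [Finset.sum_add_distrib, Finset.sum_const, Finset.card_univ, hcardfun,
            smul_eq_mul]
      _ = (2 ^ (m + 1) * a false + ∑ b' : Fin m → Bool,
              ((A (Fin.cons false b')).filter fun p => ¬ p.1 = 0).card)
          + (2 ^ (m + 1) * a true + ∑ b' : Fin m → Bool,
              ((A (Fin.cons true b')).filter fun p => ¬ p.1 = 0).card) := by
          rw [hsum, Fintype.sum_bool]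
          ring
      _ ≤ 2 ^ (m + 1) + 2 ^ (m + 1) := Nat.add_le_add (hbranch false) (hbranch true)
      _ = 2 * 2 ^ (m + 1) := by ring

theorem stmt5 (m : ℕ) (hm : 1 ≤ m) :
    -- every realization contains an independent set of m + 1 intervals
    (∀ b : Fin m → Bool, ∃ S : Finset (Fin m × Bool),
      (∀ p ∈ S, ∀ q ∈ S, p ≠ q → ¬ IntervalConflict b p q) ∧ S.card = m + 1) ∧
    -- any deterministic online algorithm accepts at most 2 intervals in expectation
    (∀ A : (Fin m → Bool) → Finset (Fin m × Bool),
      -- online: the decision about interval `p` depends only on the coin flips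
      -- revealed before its pair arrives
      (∀ b b' : Fin m → Bool, ∀ p : Fin m × Bool,
        (∀ i : Fin m, (i : ℕ) < (p.1 : ℕ) → b i = b' i) → (p ∈ A b ↔ p ∈ A b')) →
      -- feasibility: accepted intervals are pairwise disjoint
      (∀ b : Fin m → Bool, ∀ p ∈ A b, ∀ q ∈ A b, p ≠ q → ¬ IntervalConflict b p q) →
      (∑ b : Fin m → Bool, ((A b).card : ℝ)) ≤ 2 * 2 ^ m) := by
  constructor
  · -- large independent set
    intro b
    classical
    set tmax : Fin m := ⟨m - 1, by omega⟩ with htmax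
    set S : Finset (Fin m × Bool) :=
      insert (tmax, b tmax) (Finset.univ.image fun t : Fin m => (t, !b t)) with hS
    have hnotmem : (tmax, b tmax) ∉ Finset.univ.image fun t : Fin m => (t, !b t) := by
      simp only [Finset.mem_image, Finset.mem_univ, true_and, Prod.ext_iff]
      rintro ⟨t, rfl, h⟩
      simp at h
    -- key fact: any member of S with something above it has snd ≠ b fst
    have hkey : ∀ p ∈ S, ∀ q : Fin m × Bool, q ∈ S → p.1 < q.1 → p.2 ≠ b p.1 := by
      intro p hp q hq hlt
      rw [hS, Finset.mem_insert] at hp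
      rcases hp with rfl | hp
      · exfalso
        have : (q.1 : ℕ) < m := q.1.isLt
        have : (q.1 : ℕ) ≤ m - 1 := by omega
        have hle : q.1 ≤ tmax := this
        exact absurd hlt (not_lt.2 hle)
      · simp only [Finset.mem_image, Finset.mem_univ, true_and] at hp
        obtain ⟨t, rfl⟩ := hp
        simp
    refine ⟨S, ?_, ?_⟩
    · intro p hp q hq hpq hc
      rcases hc with ⟨hlt, heq⟩ | ⟨hlt, heq⟩
      · exact hkey p hp q hq hlt heq
      · exact hkey q hq p hp hlt heq
    · rw [hS, Finset.card_insert_of_notMem hnotmem,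
        Finset.card_image_of_injective _ (fun t t' h => (Prod.ext_iff.1 h).1),
        Finset.card_univ, Fintype.card_fin]
  · -- expectation bound
    intro A hon hfe
    have h := key_bound m A hon hfe
    calc ∑ b : Fin m → Bool, ((A b).card : ℝ)
        = ((∑ b : Fin m → Bool, (A b).card : ℕ) : ℝ) := by push_cast; ring
      _ ≤ ((2 * 2 ^ m : ℕ) : ℝ) := by exact_mod_cast h
      _ = 2 * 2 ^ m := by push_cast; ring
end

section
/- Define a sequence P(k) by P(0) = 0 and P(k) = p/k + (1 − p/k) P(k−1) for k ≥ 1, where p = 1/(2h) for an integer h ≥ 1. Then for all 1 ≤ k ≤ h: P(k−1) ≤ 1 − (1−p)^{k−1} ≤ 1/2, and consequently P(k) ≥ p/(2k) + P(k−1). -/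
theorem stmt6 (h : ℕ) (hh : 1 ≤ h) (p : ℝ) (hp : p = 1 / (2 * (h : ℝ)))
    (P : ℕ → ℝ) (hP0 : P 0 = 0)
    (hPrec : ∀ k : ℕ, 1 ≤ k → P k = p / k + (1 - p / k) * P (k - 1)) :
    ∀ k : ℕ, 1 ≤ k → k ≤ h →
      P (k - 1) ≤ 1 - (1 - p) ^ (k - 1) ∧
      1 - (1 - p) ^ (k - 1) ≤ 1 / 2 ∧
      p / (2 * k) + P (k - 1) ≤ P k := by
  have hhR : (1:ℝ) ≤ (h:ℝ) := by exact_mod_cast hh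
  have hp0 : 0 < p := by rw [hp]; positivity
  have hp1 : p ≤ 1/2 := by
    rw [hp]; rw [div_le_iff₀ (by linarith)]; linarith
  -- key upper bound by induction
  have key : ∀ k : ℕ, P k ≤ 1 - (1 - p) ^ k := by
    intro k
    induction k with
    | zero => simp [hP0]
    | succ n ih =>
      have hrec := hPrec (n+1) (by omega)
      simp only [Nat.add_sub_cancel] at hrec
      have hc : ((n+1 : ℕ) : ℝ) = (n : ℝ) + 1 := by push_cast; ring
      rw [hc] at hrec
      have hn1 : (0:ℝ) < (n:ℝ) + 1 := by positivity
      have hdiv0 : 0 < p / ((n:ℝ) + 1) := by positivity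
      have hdivp : p / ((n:ℝ) + 1) ≤ p := by
        rw [div_le_iff₀ hn1]
        nlinarith [(Nat.cast_nonneg n : (0:ℝ) ≤ n)]
      have hpow : (0:ℝ) ≤ (1 - p) ^ n := by
        apply pow_nonneg; linarith
      rw [hrec]
      have : (1 - p)^(n+1) = (1-p) * (1-p)^n := by ring
      rw [this]
      nlinarith [mul_nonneg (le_of_lt hdiv0) hpow]
  intro k hk1 hkh
  -- second part: (1-p)^(k-1) ≥ 1/2
  have hhne : (h:ℝ) ≠ 0 := by linarith
  have hbern : (1:ℝ)/2 ≤ (1 - p) ^ h := by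
    have := one_add_mul_le_pow (a := -p) (by linarith) h
    have hhp : (h:ℝ) * p = 1/2 := by rw [hp]; field_simp
    calc (1:ℝ)/2 = 1 + (h:ℝ) * (-p) := by rw [mul_neg, hhp]; ring
    _ ≤ (1 + -p)^h := this
    _ = (1 - p)^h := by ring_nf
  have hmono : (1 - p) ^ h ≤ (1 - p) ^ (k-1) := by
    apply pow_le_pow_of_le_one (by linarith) (by linarith) (by omega)
  have hhalf : (1:ℝ)/2 ≤ (1 - p) ^ (k-1) := le_trans hbern hmono
  have h1 : P (k - 1) ≤ 1 - (1 - p) ^ (k - 1) := key (k-1)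
  refine ⟨h1, by linarith, ?_⟩
  have hPk1 : P (k-1) ≤ 1/2 := by linarith
  have hrec := hPrec k hk1
  have hkR : (1:ℝ) ≤ (k:ℝ) := by exact_mod_cast hk1
  have hkpos : (0:ℝ) < (k:ℝ) := by linarith
  rw [hrec]
  have e1 : p / (2 * (k:ℝ)) = (p / k) / 2 := by
    rw [div_div]; ring_nf
  rw [e1]
  have hpk : 0 < p / (k:ℝ) := by positivity
  nlinarith [mul_le_mul_of_nonneg_left hPk1 (le_of_lt hpk)]
end

section
/- Let OPT(w)[a,d] denote the maximum weight of an independent set among requests whose time intervals are contained in [a,d], and OPT(w)[a,x,d] the maximum among requests with arrival in [a,x], departure in [x,d], and active at time x. Then for any a ≤ x ≤ d and any nonnegative weights w: OPT(w)[a,d] ≤ OPT(w)[a,x,d] + OPT(w)[a,x] + OPT(w)[x,d]. -/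
/-! Any split of the requests into two classes splits an optimal schedule into two feasible
ones, so `optTime` is subadditive under covers of the predicate; the theorem covers
`[a, d]` by the requests active at `x`, those ending by `x` and those starting from `x`. -/

open scoped Classical in
/-- Maximum weight of a conflict-free set of requests satisfying predicate `P`;
two requests conflict iff they are adjacent in `G` and their time intervals intersect. -/
noncomputable def optTime {V : Type*} [Fintype V] (G : SimpleGraph V)
    (arr dep : V → ℝ) (w : V → NNReal) (P : V → Prop) : NNReal :=
  (Finset.univ : Finset V).powerset.sup fun S =>
    if (∀ v ∈ S, P v) ∧ (∀ u ∈ S, ∀ v ∈ S, u ≠ v →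
        ¬ (G.Adj u v ∧ max (arr u) (arr v) ≤ min (dep u) (dep v))) then
      ∑ v ∈ S, w v
    else 0

section

variable {V : Type*} (G : SimpleGraph V) (arr dep : V → ℝ)

def IsConflictFree (S : Finset V) : Prop :=
  ∀ u ∈ S, ∀ v ∈ S, u ≠ v → ¬ (G.Adj u v ∧ max (arr u) (arr v) ≤ min (dep u) (dep v))

variable {G arr dep}

theorem IsConflictFree.mono {S T : Finset V} (hS : IsConflictFree G arr dep S) (hTS : T ⊆ S) :
    IsConflictFree G arr dep T :=
  fun u hu v hv => hS u (hTS hu) v (hTS hv)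

variable [Fintype V] (w : V → NNReal) {P Q R : V → Prop}

theorem sum_le_optTime {S : Finset V} (hP : ∀ v ∈ S, P v) (hS : IsConflictFree G arr dep S) :
    ∑ v ∈ S, w v ≤ optTime G arr dep w P := by
  refine le_of_eq_of_le ?_ (Finset.le_sup (Finset.mem_powerset.mpr (Finset.subset_univ S)))
  exact (if_pos ⟨hP, hS⟩).symm

theorem optTime_le_of_forall {c : NNReal}
    (h : ∀ S : Finset V, (∀ v ∈ S, P v) → IsConflictFree G arr dep S → ∑ v ∈ S, w v ≤ c) :
    optTime G arr dep w P ≤ c := by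
  refine Finset.sup_le fun S _ => ?_
  split_ifs with hS
  · exact h S hS.1 hS.2
  · exact zero_le

theorem optTime_le_add_of_imp_or (hPQR : ∀ v, P v → Q v ∨ R v) :
    optTime G arr dep w P ≤ optTime G arr dep w Q + optTime G arr dep w R := by
  classical
  refine optTime_le_of_forall w fun S hP hS => ?_
  rw [← Finset.sum_filter_add_sum_filter_not S Q]
  gcongr
  · exact sum_le_optTime w (fun v hv => (Finset.mem_filter.mp hv).2)
      (hS.mono (Finset.filter_subset _ _))
  · refine sum_le_optTime w (fun v hv => ?_) (hS.mono (Finset.filter_subset _ _))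
    obtain ⟨hvS, hnQ⟩ := Finset.mem_filter.mp hv
    exact (hPQR v (hP v hvS)).resolve_left hnQ

end

theorem stmt9_general {V : Type*} [Fintype V] (G : SimpleGraph V) (arr dep : V → ℝ)
    (w : V → NNReal)
    (a x d : ℝ) :
    optTime G arr dep w (fun v => a ≤ arr v ∧ dep v ≤ d) ≤
      optTime G arr dep w (fun v => a ≤ arr v ∧ arr v ≤ x ∧ x ≤ dep v ∧ dep v ≤ d) +
      optTime G arr dep w (fun v => a ≤ arr v ∧ dep v ≤ x) +
      optTime G arr dep w (fun v => x ≤ arr v ∧ dep v ≤ d) := by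
  have hcover : ∀ v, a ≤ arr v ∧ dep v ≤ d →
      (a ≤ arr v ∧ arr v ≤ x ∧ x ≤ dep v ∧ dep v ≤ d) ∨
        ((a ≤ arr v ∧ dep v ≤ x) ∨ (x ≤ arr v ∧ dep v ≤ d)) := by
    rintro v ⟨ha, hd⟩
    rcases le_total (arr v) x with harr | harr
    · rcases le_total x (dep v) with hdep | hdep
      · exact Or.inl ⟨ha, harr, hdep, hd⟩
      · exact Or.inr (Or.inl ⟨ha, hdep⟩)
    · exact Or.inr (Or.inr ⟨harr, hd⟩)
  calc _ ≤ _ + _ := optTime_le_add_of_imp_or w hcover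
    _ ≤ _ + (_ + _) := by gcongr; exact optTime_le_add_of_imp_or w fun _ => id
    _ = _ := (add_assoc _ _ _).symm

theorem stmt9 {V : Type*} [Fintype V] (G : SimpleGraph V) (arr dep : V → ℝ)
    (hvalid : ∀ v, arr v ≤ dep v) (w : V → NNReal)
    (a x d : ℝ) (hax : a ≤ x) (hxd : x ≤ d) :
    optTime G arr dep w (fun v => a ≤ arr v ∧ dep v ≤ d) ≤
      optTime G arr dep w (fun v => a ≤ arr v ∧ arr v ≤ x ∧ x ≤ dep v ∧ dep v ≤ d) +
      optTime G arr dep w (fun v => a ≤ arr v ∧ dep v ≤ x) +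
      optTime G arr dep w (fun v => x ≤ arr v ∧ dep v ≤ d) :=
  stmt9_general G arr dep w a x d
end

section
/- Let S* be an independent set of total weight W = ŵ(S*) in an n-vertex graph, let B* = max_v ŵ(v) ≤ W/4, and define S*_j = {v ∈ S* : v ≠ v*, ŵ(v) ≥ 2^{−j} B*} for j = 0,...,⌈log n⌉ + 1, where v* attains the maximum weight. Then ∑_{j=0}^{⌈log n⌉+1} 2^{−j} B* |S*_j| ≥ W/8. -/
open scoped Classical

theorem stmt16 {V : Type*} [Fintype V] [DecidableEq V] (w : V → ℝ) (hw : ∀ v, 0 ≤ w v)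
    (S : Finset V) (vstar : V) (hmax : ∀ v : V, w v ≤ w vstar)
    (hB : w vstar ≤ (∑ v ∈ S, w v) / 4) :
    (∑ v ∈ S, w v) / 8 ≤
      ∑ j ∈ Finset.range (⌈Real.logb 2 (Fintype.card V)⌉₊ + 2),
        (2 : ℝ) ^ (-(j : ℝ)) * w vstar *
          ((S.filter fun v => v ≠ vstar ∧ (2 : ℝ) ^ (-(j : ℝ)) * w vstar ≤ w v).card : ℝ) := by
  classical
  set n : ℕ := Fintype.card V with hn
  set B : ℝ := w vstar with hBdef
  set c : ℕ := ⌈Real.logb 2 n⌉₊ with hc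
  set J : ℕ := c + 2 with hJ
  have hB0 : 0 ≤ B := hw vstar
  set W : ℝ := ∑ v ∈ S, w v with hWdef
  have hW0 : 0 ≤ W := Finset.sum_nonneg fun v _ => hw v
  set thr : ℝ := (2:ℝ) ^ (-((c + 1 : ℕ) : ℝ)) * B with hthr
  have hthr0 : 0 ≤ thr := by
    have := Real.rpow_pos_of_pos (by norm_num : (0:ℝ) < 2) (-((c + 1 : ℕ) : ℝ))
    positivity
  set T : Finset V := S.filter (fun v => v ≠ vstar ∧ thr ≤ w v) with hT
  -- minimal level for each relevant vertex
  have hspec : ∀ v : V, ∃ j : ℕ, v ∈ T →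
      (j < J ∧ (2:ℝ) ^ (-(j:ℝ)) * B ≤ w v ∧ w v ≤ 2 * ((2:ℝ) ^ (-(j:ℝ)) * B)) := by
    intro v
    by_cases hv : v ∈ T
    · obtain ⟨hvS, hvne, hvw⟩ : v ∈ S ∧ v ≠ vstar ∧ thr ≤ w v := by
        simpa [hT] using hv
      have hex : ∃ j : ℕ, (2:ℝ) ^ (-(j:ℝ)) * B ≤ w v := ⟨c + 1, hvw⟩
      refine ⟨Nat.find hex, fun _ => ⟨?_, Nat.find_spec hex, ?_⟩⟩
      · have : Nat.find hex ≤ c + 1 := Nat.find_min' hex hvw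
        omega
      · rcases Nat.eq_zero_or_pos (Nat.find hex) with h0 | hpos
        · rw [h0]
          have : w v ≤ B := hmax v
          simp only [Nat.cast_zero, neg_zero, Real.rpow_zero, one_mul]
          linarith
        · have hmin := Nat.find_min hex (Nat.sub_lt hpos one_pos)
          push_neg at hmin
          have heq : (2:ℝ) ^ (-((Nat.find hex - 1 : ℕ) : ℝ)) =
              2 * (2:ℝ) ^ (-((Nat.find hex : ℕ) : ℝ)) := by
            rw [Nat.cast_sub hpos]
            rw [show -(((Nat.find hex : ℕ) : ℝ) - (1:ℕ)) = 1 + -(Nat.find hex : ℝ) by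
              push_cast; ring]
            rw [Real.rpow_add (by norm_num : (0:ℝ) < 2), Real.rpow_one]
          rw [heq] at hmin
          nlinarith [hmin]
    · exact ⟨0, fun h => absurd h hv⟩
  choose jf hjf using hspec
  -- per-level bound
  have key : ∀ j ∈ Finset.range J,
      (∑ v ∈ T.filter (fun v => jf v = j), w v) / 2 ≤
        (2:ℝ) ^ (-(j:ℝ)) * B *
          ((S.filter fun v => v ≠ vstar ∧ (2:ℝ) ^ (-(j:ℝ)) * B ≤ w v).card : ℝ) := by
    intro j hj
    have hpow0 : (0:ℝ) ≤ (2:ℝ) ^ (-(j:ℝ)) * B := by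
      have := Real.rpow_pos_of_pos (by norm_num : (0:ℝ) < 2) (-(j:ℝ))
      positivity
    have hsub : T.filter (fun v => jf v = j) ⊆
        S.filter fun v => v ≠ vstar ∧ (2:ℝ) ^ (-(j:ℝ)) * B ≤ w v := by
      intro v hv
      obtain ⟨hvT, hvj⟩ := Finset.mem_filter.mp hv
      obtain ⟨hvS, hvne, -⟩ : v ∈ S ∧ v ≠ vstar ∧ thr ≤ w v := by simpa [hT] using hvT
      have := (hjf v hvT).2.1
      rw [hvj] at this
      exact Finset.mem_filter.mpr ⟨hvS, hvne, this⟩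
    have hub : ∀ v ∈ T.filter (fun v => jf v = j), w v ≤ 2 * ((2:ℝ) ^ (-(j:ℝ)) * B) := by
      intro v hv
      obtain ⟨hvT, hvj⟩ := Finset.mem_filter.mp hv
      have := (hjf v hvT).2.2
      rwa [hvj] at this
    calc (∑ v ∈ T.filter (fun v => jf v = j), w v) / 2
        ≤ ((T.filter (fun v => jf v = j)).card : ℝ) * (2 * ((2:ℝ) ^ (-(j:ℝ)) * B)) / 2 := by
          have := Finset.sum_le_card_nsmul _ _ _ hub
          rw [nsmul_eq_mul] at this
          linarith
      _ = ((T.filter (fun v => jf v = j)).card : ℝ) * ((2:ℝ) ^ (-(j:ℝ)) * B) := by ring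
      _ ≤ ((S.filter fun v => v ≠ vstar ∧ (2:ℝ) ^ (-(j:ℝ)) * B ≤ w v).card : ℝ) *
            ((2:ℝ) ^ (-(j:ℝ)) * B) := by
          apply mul_le_mul_of_nonneg_right _ hpow0
          exact_mod_cast Finset.card_le_card hsub
      _ = (2:ℝ) ^ (-(j:ℝ)) * B *
            ((S.filter fun v => v ≠ vstar ∧ (2:ℝ) ^ (-(j:ℝ)) * B ≤ w v).card : ℝ) := by ring
  -- fiberwise sum
  have hfib : ∑ j ∈ Finset.range J, ∑ v ∈ T.filter (fun v => jf v = j), w v = ∑ v ∈ T, w v := by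
    exact Finset.sum_fiberwise_of_maps_to (fun v hv => Finset.mem_range.mpr (hjf v hv).1) w
  have hRHS : (∑ v ∈ T, w v) / 2 ≤
      ∑ j ∈ Finset.range J, (2:ℝ) ^ (-(j:ℝ)) * B *
        ((S.filter fun v => v ≠ vstar ∧ (2:ℝ) ^ (-(j:ℝ)) * B ≤ w v).card : ℝ) := by
    rw [← hfib, Finset.sum_div]
    exact Finset.sum_le_sum key
  -- lower bound on the sum over T
  have hnotp : ∑ v ∈ S.filter (fun v => ¬(v ≠ vstar ∧ thr ≤ w v)), w v ≤ B + (n:ℝ) * thr := by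
    have hsub : S.filter (fun v => ¬(v ≠ vstar ∧ thr ≤ w v)) ⊆
        insert vstar (S.filter fun v => w v < thr) := by
      intro v hv
      obtain ⟨hvS, hvcond⟩ := Finset.mem_filter.mp hv
      push_neg at hvcond
      by_cases hve : v = vstar
      · exact hve ▸ Finset.mem_insert_self _ _
      · exact Finset.mem_insert_of_mem (Finset.mem_filter.mpr ⟨hvS, hvcond hve⟩)
    have hsmall : ∑ v ∈ S.filter (fun v => w v < thr), w v ≤ (n:ℝ) * thr := by
      have h1 := Finset.sum_le_card_nsmul (S.filter fun v => w v < thr) w thr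
        (fun v hv => le_of_lt (Finset.mem_filter.mp hv).2)
      rw [nsmul_eq_mul] at h1
      have h2 : ((S.filter fun v => w v < thr).card : ℝ) ≤ (n:ℝ) := by
        exact_mod_cast (Finset.card_le_univ _).trans_eq (Finset.card_univ)
      nlinarith
    calc ∑ v ∈ S.filter (fun v => ¬(v ≠ vstar ∧ thr ≤ w v)), w v
        ≤ ∑ v ∈ insert vstar (S.filter fun v => w v < thr), w v :=
          Finset.sum_le_sum_of_subset_of_nonneg hsub (fun v _ _ => hw v)
      _ ≤ B + (n:ℝ) * thr := by
          by_cases hmem : vstar ∈ S.filter fun v => w v < thr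
          · rw [Finset.insert_eq_self.mpr hmem]
            linarith
          · rw [Finset.sum_insert hmem]
            linarith
  have hsplitsum : ∑ v ∈ T, w v + ∑ v ∈ S.filter (fun v => ¬(v ≠ vstar ∧ thr ≤ w v)), w v = W := by
    rw [hT, hWdef]
    exact Finset.sum_filter_add_sum_filter_not S _ w
  -- n * thr ≤ B / 2
  have hnthr : (n:ℝ) * thr ≤ B / 2 := by
    have hn1 : 0 < n := Fintype.card_pos_iff.mpr ⟨vstar⟩
    have hnR : (0:ℝ) < (n:ℝ) := by exact_mod_cast hn1
    have hle : (n:ℝ) ≤ (2:ℝ) ^ ((c:ℕ) : ℝ) := by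
      calc (n:ℝ) = (2:ℝ) ^ (Real.logb 2 n) :=
            (Real.rpow_logb (by norm_num) (by norm_num) hnR).symm
        _ ≤ (2:ℝ) ^ ((c:ℕ) : ℝ) :=
            Real.rpow_le_rpow_of_exponent_le one_le_two (Nat.le_ceil _)
    have hpos : (0:ℝ) < (2:ℝ) ^ (-((c:ℕ):ℝ)) := Real.rpow_pos_of_pos (by norm_num) _
    have h2 : (n:ℝ) * (2:ℝ) ^ (-((c:ℕ):ℝ)) ≤ 1 := by
      have := mul_le_mul_of_nonneg_right hle hpos.le
      rwa [← Real.rpow_add (by norm_num : (0:ℝ) < 2), add_neg_cancel, Real.rpow_zero] at this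
    have heq : thr = (2:ℝ) ^ (-((c:ℕ):ℝ)) * (2:ℝ)⁻¹ * B := by
      rw [hthr]
      congr 1
      rw [show -(((c + 1 : ℕ)) : ℝ) = -((c:ℕ):ℝ) + (-1) by push_cast; ring]
      rw [Real.rpow_add (by norm_num : (0:ℝ) < 2), Real.rpow_neg_one]
    rw [heq]
    nlinarith
  have hTsum : W - B - B / 2 ≤ ∑ v ∈ T, w v := by linarith
  have hBW : B ≤ W / 4 := hB
  linarith
end

section
/- Let Y = ∑_{u} w'_u Z_u be a weighted sum of independent 0/1 random variables Z_u with all weights w'_u ∈ [0, 1/(4e·log₂ n)] and E[Y] ≤ 1/(2e). Then P(Y ≥ 1) ≤ 2^{−2 log₂ n} = 1/n². -/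
/-!
Chernoff's method with parameter `t = 4e·log₂ n`. Every summand `X_u = w_u Z_u` satisfies
`0 ≤ t X_u ≤ 1`, and on `[0, 1]` convexity gives `eˣ ≤ 1 + (e - 1)x`, so `E[exp (t X_u)] ≤ exp ((e - 1) t E[X_u])`.
By independence `E[exp (t Y)] ≤ exp ((e - 1) t E[Y]) ≤ exp ((e - 1) t / (2e))`, and Markov's
inequality gives `P(Y ≥ 1) ≤ exp (-(e + 1) t / (2e)) = exp (-2(e + 1) log₂ n) ≤ n⁻²`.
-/

open MeasureTheory ProbabilityTheory Real

lemma Real.exp_le_one_add_mul_of_mem_Icc {x : ℝ} (hx : x ∈ Set.Icc (0 : ℝ) 1) :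
    exp x ≤ 1 + (exp 1 - 1) * x := by
  have h := convexOn_exp.2 (Set.mem_univ 0) (Set.mem_univ 1) (sub_nonneg.2 hx.2) hx.1
    (sub_add_cancel 1 x)
  simp only [smul_eq_mul, mul_zero, mul_one, zero_add, exp_zero] at h
  linarith

lemma Real.exp_neg_two_mul_log_two_mul_logb {x : ℝ} (hx : 0 < x) :
    exp (-(2 * log 2) * logb 2 x) = 1 / x ^ 2 := by
  have : -(2 * log 2) * logb 2 x = -(2 * log x) := by
    rw [← log_div_log]
    field_simp
  rw [this, exp_neg, show 2 * log x = log (x ^ 2) by simp [log_pow], exp_log (by positivity),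
    one_div]

namespace ProbabilityTheory

variable {Ω ι : Type*} [MeasurableSpace Ω] {μ : Measure Ω} {b t : ℝ}

lemma mgf_le_exp_mul_integral [IsProbabilityMeasure μ] {X : Ω → ℝ} (hXm : Measurable X)
    (hX : ∀ᵐ ω ∂μ, X ω ∈ Set.Icc 0 b) (ht : 0 ≤ t) (htb : t * b ≤ 1) :
    mgf X μ t ≤ exp ((exp 1 - 1) * t * μ[X]) := by
  have hXi : Integrable X μ := .of_mem_Icc 0 b hXm.aemeasurable hX
  calc mgf X μ t ≤ ∫ ω, (1 + (exp 1 - 1) * (t * X ω)) ∂μ :=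
        integral_mono_ae (integrable_exp_mul_of_mem_Icc hXm.aemeasurable hX)
          ((integrable_const 1).add ((hXi.const_mul t).const_mul _)) <| by
          filter_upwards [hX] with ω hω
          exact exp_le_one_add_mul_of_mem_Icc
            ⟨mul_nonneg ht hω.1, (mul_le_mul_of_nonneg_left hω.2 ht).trans htb⟩
    _ = 1 + (exp 1 - 1) * t * μ[X] := by
        rw [integral_add (integrable_const 1) ((hXi.const_mul t).const_mul _), integral_const,
          integral_const_mul, integral_const_mul]
        simp [mul_assoc]
    _ ≤ exp ((exp 1 - 1) * t * μ[X]) := by linarith [add_one_le_exp ((exp 1 - 1) * t * μ[X])]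

variable [Fintype ι] {X : ι → Ω → ℝ}

lemma iIndepFun.mgf_sum_le_exp_mul_integral (hind : iIndepFun X μ) (hXm : ∀ i, Measurable (X i))
    (hX : ∀ i, ∀ᵐ ω ∂μ, X i ω ∈ Set.Icc 0 b) (ht : 0 ≤ t) (htb : t * b ≤ 1) :
    mgf (∑ i, X i) μ t ≤ exp ((exp 1 - 1) * t * ∫ ω, ∑ i, X i ω ∂μ) := by
  have := hind.isProbabilityMeasure
  calc mgf (∑ i, X i) μ t = ∏ i, mgf (X i) μ t := hind.mgf_sum hXm _
    _ ≤ ∏ i, exp ((exp 1 - 1) * t * μ[X i]) :=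
        Finset.prod_le_prod (fun _ _ => mgf_nonneg)
          fun i _ => mgf_le_exp_mul_integral (hXm i) (hX i) ht htb
    _ = exp ((exp 1 - 1) * t * ∫ ω, ∑ i, X i ω ∂μ) := by
        rw [← exp_sum, ← Finset.mul_sum, integral_finsetSum _ fun i _ =>
          .of_mem_Icc 0 b (hXm i).aemeasurable (hX i)]

lemma iIndepFun.measureReal_sum_ge_le_exp (hind : iIndepFun X μ) (hXm : ∀ i, Measurable (X i))
    (hX : ∀ i, ∀ᵐ ω ∂μ, X i ω ∈ Set.Icc 0 b) (ht : 0 ≤ t) (htb : t * b ≤ 1) (a : ℝ) :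
    μ.real {ω | a ≤ ∑ i, X i ω} ≤ exp (-t * a + (exp 1 - 1) * t * ∫ ω, ∑ i, X i ω ∂μ) := by
  have := hind.isProbabilityMeasure
  have hchernoff := measure_ge_le_exp_mul_mgf a ht <| hind.integrable_exp_mul_sum hXm (s := .univ)
    fun i _ => integrable_exp_mul_of_mem_Icc (hXm i).aemeasurable (hX i)
  simp only [Finset.sum_apply] at hchernoff
  rw [exp_add]
  exact hchernoff.trans <| mul_le_mul_of_nonneg_left
    (hind.mgf_sum_le_exp_mul_integral hXm hX ht htb) (exp_pos _).le

end ProbabilityTheory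

theorem stmt18 {Ω ι : Type*} [MeasurableSpace Ω] (μ : Measure Ω) [IsProbabilityMeasure μ]
    [Fintype ι] (n : ℕ) (hn : 2 ≤ n) (Z : ι → Ω → ℝ) (w : ι → ℝ)
    (hZ01 : ∀ u ω, Z u ω = 0 ∨ Z u ω = 1) (hZmeas : ∀ u, Measurable (Z u))
    (hind : iIndepFun Z μ)
    (hw : ∀ u, w u ∈ Set.Icc (0 : ℝ) (1 / (4 * Real.exp 1 * Real.logb 2 n)))
    (hE : ∫ ω, ∑ u, w u * Z u ω ∂μ ≤ 1 / (2 * Real.exp 1)) :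
    μ {ω | 1 ≤ ∑ u, w u * Z u ω} ≤ ENNReal.ofReal (1 / (n : ℝ) ^ 2) := by
  set L := logb 2 n
  have hL : 0 < L := logb_pos one_lt_two (by exact_mod_cast hn)
  set t := 4 * exp 1 * L
  have ht : 0 < t := by positivity
  have he : 1 ≤ exp 1 := one_le_exp zero_le_one
  have hwZ : ∀ u, ∀ᵐ ω ∂μ, w u * Z u ω ∈ Set.Icc 0 (1 / t) := fun u => .of_forall fun ω => by
    rcases hZ01 u ω with h | h <;> simp only [h, mul_zero, mul_one]
    exacts [⟨le_rfl, (hw u).1.trans (hw u).2⟩, hw u]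
  have hchernoff := (hind.comp (fun u x => w u * x) fun u => measurable_const_mul (w u))
    |>.measureReal_sum_ge_le_exp (fun u => (hZmeas u).const_mul (w u)) hwZ ht.le
      (mul_one_div_cancel ht.ne').le 1
  rw [← ofReal_measureReal]
  refine ENNReal.ofReal_le_ofReal (hchernoff.trans ?_)
  calc exp (-t * 1 + (exp 1 - 1) * t * ∫ ω, ∑ u, w u * Z u ω ∂μ)
      ≤ exp (-t * 1 + (exp 1 - 1) * t * (1 / (2 * exp 1))) := by gcongr
    _ = exp (-(2 * (exp 1 + 1)) * L) := by congr 1; field_simp; ring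
    _ ≤ exp (-(2 * log 2) * L) := by gcongr; linarith [log_le_sub_one_of_pos two_pos]
    _ = 1 / (n : ℝ) ^ 2 := exp_neg_two_mul_log_two_mul_logb (by positivity)
end
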